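/- arXiv:2505.12976 — 11 statements merged into one kernel-verified Lean document; each statement's English description precedes it below -/
import Mathlib

section
/- Let G = (V, E) be a finite directed graph with distinct distinguished vertices a, b such that a has no incoming edges, b has no outgoing edges, E has no self-loops, and E is asymmetric (never containing both (x,y) and (y,x)). Let W be the weighted tournament graph constructed from G as described. Then a is a Schulze winner of W if and only if b is reachable from a in G. -/
variable {V : Type*}

/-- Width of a path given as a list of vertices: the minimum weight of its edges. -/
def pathWidth (μ : V → V → ℝ) : List V → ℝ
  | [x, y] => μ x y
  | x :: y :: z :: rest => min (μ x y) (pathWidth μ (y :: z :: rest))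
  | _ => 0

/-- `xs` is a path from `a` to `b` in the digraph with edge relation `E`. -/
def IsPath (E : V → V → Prop) (a b : V) (xs : List V) : Prop :=
  xs.Chain' E ∧ xs.head? = some a ∧ xs.getLast? = some b

/-- `p(a,b)`: the maximum width of a path from `a` to `b` (`0` if there is none). -/
noncomputable def widestPath (E : V → V → Prop) (μ : V → V → ℝ) (a b : V) : ℝ :=
  sSup {w : ℝ | ∃ xs : List V, IsPath E a b xs ∧ pathWidth μ xs = w}

/-- `a` beats `b` according to the Schulze method: `p(a,b) > p(b,a)`. -/
def Beats (E : V → V → Prop) (μ : V → V → ℝ) (a b : V) : Prop :=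
  widestPath E μ b a < widestPath E μ a b

/-- `c` is a Schulze winner: no candidate beats `c`. -/
def SchulzeWinner (E : V → V → Prop) (μ : V → V → ℝ) (c : V) : Prop :=
  ∀ b : V, ¬ Beats E μ b c

/-- Edge relation of the weighted tournament graph `W` constructed from `(G, a, b)`:
the vertex set is `V` together with a fresh vertex `r_u` for every `u ≠ b`;
edges are those of `G`, plus `(b, r_u)` and `(r_u, u)` for every `u ≠ b`. -/
def WE (E : V → V → Prop) (b : V) :
    (V ⊕ {u : V // u ≠ b}) → (V ⊕ {u : V // u ≠ b}) → Prop
  | Sum.inl x, Sum.inl y => E x y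
  | Sum.inl x, Sum.inr _ => x = b
  | Sum.inr u, Sum.inl y => y = u.1
  | Sum.inr _, Sum.inr _ => False

/-- Weight function of `W`: the edge `(r_a, a)` has weight `2`, every other edge weight `4`. -/
noncomputable def WMu [DecidableEq V] (a b : V) :
    (V ⊕ {u : V // u ≠ b}) → (V ⊕ {u : V // u ≠ b}) → ℝ
  | Sum.inr u, Sum.inl y => if u.1 = a ∧ y = a then 2 else 4
  | _, _ => 4

section Aux
variable [DecidableEq V] (a b : V)

lemma WMu_le_four : ∀ x y, WMu a b x y ≤ (4:ℝ) := by
  rintro (x | x) (y | y) <;> simp only [WMu] <;>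
    first | (split_ifs <;> norm_num) | norm_num

lemma two_le_WMu : ∀ x y, (2:ℝ) ≤ WMu a b x y := by
  rintro (x | x) (y | y) <;> simp only [WMu] <;>
    first | (split_ifs <;> norm_num) | norm_num

lemma pathWidth_le_four : ∀ xs, pathWidth (WMu a b) xs ≤ 4
  | [] => by norm_num [pathWidth]
  | [_] => by norm_num [pathWidth]
  | [x, y] => by simpa [pathWidth] using WMu_le_four a b x y
  | x :: y :: z :: rest => by
      have := pathWidth_le_four (y :: z :: rest)
      simp only [pathWidth]
      exact le_trans (min_le_right _ _) this

lemma two_le_pathWidth : ∀ xs, 2 ≤ xs.length → (2:ℝ) ≤ pathWidth (WMu a b) xs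
  | [x, y], _ => by simpa [pathWidth] using two_le_WMu a b x y
  | x :: y :: z :: rest, _ => by
      have := two_le_pathWidth (y :: z :: rest) (by simp)
      simp only [pathWidth]
      exact le_min (two_le_WMu a b x y) this

lemma bddAbove_widths (F : _ → _ → Prop) (x y) :
    BddAbove {w : ℝ | ∃ xs, IsPath F x y xs ∧ pathWidth (WMu a b) xs = w} :=
  ⟨4, by rintro w ⟨xs, _, rfl⟩; exact pathWidth_le_four a b xs⟩

variable (E : V → V → Prop)

lemma width_to_a (ha : ∀ v, ¬ E v a) :
    ∀ xs : List (V ⊕ {u : V // u ≠ b}), xs.Chain' (WE E b) →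
      xs.getLast? = some (Sum.inl a) → pathWidth (WMu a b) xs ≤ 2
  | [], _, _ => by norm_num [pathWidth]
  | [_], _, _ => by norm_num [pathWidth]
  | [x, y], hc, hl => by
      have hy : y = Sum.inl a := by simpa using hl
      subst hy
      have hxy : WE E b x (Sum.inl a) := (List.isChain_cons_cons.mp hc).1
      match x, hxy with
      | Sum.inl v, hxy => exact absurd hxy (ha v)
      | Sum.inr u, hxy =>
          have h' : (u : V) = a := (show a = u.1 from hxy).symm
          simp [pathWidth, WMu, h']
  | x :: y :: z :: rest, hc, hl => by
      have := width_to_a ha (y :: z :: rest) (List.isChain_cons_cons.mp hc).2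
        (by rwa [List.getLast?_cons_cons] at hl)
      simp only [pathWidth]
      exact le_trans (min_le_right _ _) this

lemma rtg_of_path :
    ∀ (xs : List (V ⊕ {u : V // u ≠ b})) (x : V), xs.Chain' (WE E b) →
      xs.head? = some (Sum.inl x) → xs.getLast? = some (Sum.inl b) →
      Relation.ReflTransGen E x b
  | [], x, _, hh, _ => by simp at hh
  | [y], x, _, hh, hl => by
      have : Sum.inl x = Sum.inl (α := V) (β := {u : V // u ≠ b}) b := by
        rw [show y = Sum.inl x by simpa using hh] at hl; simpa using hl
      exact (Sum.inl.inj this) ▸ Relation.ReflTransGen.refl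
  | y :: z :: rest, x, hc, hh, hl => by
      have hy : y = Sum.inl x := by simpa using hh
      subst hy
      obtain ⟨hxz, hc'⟩ := List.isChain_cons_cons.mp hc
      have hl' : (z :: rest).getLast? = some (Sum.inl b) := by
        rwa [List.getLast?_cons_cons] at hl
      match z, hxz with
      | Sum.inl w, hxz =>
          exact Relation.ReflTransGen.head hxz
            (rtg_of_path (Sum.inl w :: rest) w hc' rfl hl')
      | Sum.inr u, hxz =>
          exact (show x = b from hxz) ▸ Relation.ReflTransGen.refl

end Aux

theorem stmt_0 {V : Type*} [Fintype V] [DecidableEq V] (E : V → V → Prop) (a b : V)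
    (hab : a ≠ b)
    (hirr : ∀ v, ¬ E v v)
    (hasym : ∀ x y, E x y → ¬ E y x)
    (ha : ∀ v, ¬ E v a)
    (hb : ∀ v, ¬ E b v) :
    SchulzeWinner (WE E b) (WMu a b) (Sum.inl a) ↔ Relation.ReflTransGen E a b := by
  constructor
  · intro hwin
    by_contra hrtg
    apply hwin (Sum.inl b)
    have h1 : widestPath (WE E b) (WMu a b) (Sum.inl a) (Sum.inl b) ≤ 0 := by
      apply Real.sSup_le _ le_rfl
      rintro w ⟨xs, ⟨hc, hh, hl⟩, rfl⟩
      exact absurd (rtg_of_path b E xs a hc hh hl) hrtg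
    have h2 : (2:ℝ) ≤ widestPath (WE E b) (WMu a b) (Sum.inl b) (Sum.inl a) := by
      apply le_csSup (bddAbove_widths a b _ _ _)
      refine ⟨[Sum.inl b, Sum.inr ⟨a, hab⟩, Sum.inl a], ⟨?_, rfl, rfl⟩, ?_⟩
      · exact List.Chain.cons rfl (List.Chain.cons rfl List.Chain.nil)
      · norm_num [pathWidth, WMu]
    simp only [Beats]
    linarith
  · intro hrtg c hbeats
    rcases eq_or_ne c (Sum.inl a) with rfl | hc
    · exact absurd hbeats (lt_irrefl _)
    have hle2 : widestPath (WE E b) (WMu a b) c (Sum.inl a) ≤ 2 := by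
      apply Real.sSup_le _ (by norm_num)
      rintro w ⟨xs, ⟨hch, _, hl⟩, rfl⟩
      exact width_to_a a b E ha xs hch hl
    obtain ⟨l, hchain, hlast⟩ := List.exists_isChain_cons_of_relationReflTransGen hrtg
    set L : List (V ⊕ {u : V // u ≠ b}) := (a :: l).map Sum.inl with hL
    have hLchain : L.Chain' (WE E b) := by
      rw [hL, List.Chain', List.isChain_map]
      exact hchain
    have hLhead : L.head? = some (Sum.inl a) := rfl
    have hLlast : L.getLast? = some (Sum.inl b) := by
      rw [hL, List.getLast?_map, List.getLast?_eq_getLast_of_ne_nil (List.cons_ne_nil _ _),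
        hlast]
      rfl
    have key : ∃ xs, IsPath (WE E b) (Sum.inl a) c xs ∧ 2 ≤ xs.length := by
      match c with
      | Sum.inl u =>
        rcases eq_or_ne u b with rfl | hub
        · refine ⟨L, ⟨hLchain, hLhead, hLlast⟩, ?_⟩
          rcases l with _ | ⟨v, l⟩
          · exact absurd (by simpa using hlast) hab
          · simp [hL]
        · refine ⟨L ++ [Sum.inr ⟨u, hub⟩, Sum.inl u], ⟨?_, ?_, ?_⟩, ?_⟩
          · rw [List.Chain', List.isChain_append]
            refine ⟨hLchain, List.Chain.cons rfl List.Chain.nil, ?_⟩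
            intro x hx y hy
            rw [hLlast] at hx
            simp at hx hy
            subst hx; subst hy; rfl
          · rw [List.head?_append, hLhead]; rfl
          · simp
          · simp [hL]
      | Sum.inr u =>
        refine ⟨L ++ [Sum.inr u], ⟨?_, ?_, ?_⟩, ?_⟩
        · rw [List.Chain', List.isChain_append]
          refine ⟨hLchain, List.isChain_singleton _, ?_⟩
          intro x hx y hy
          rw [hLlast] at hx
          simp at hx hy
          subst hx; subst hy; rfl
        · rw [List.head?_append, hLhead]; rfl
        · simp
        · simp [hL]
    obtain ⟨xs, hxs, hlen⟩ := key
    have hmem := le_csSup (bddAbove_widths a b (WE E b) (Sum.inl a) c) ⟨xs, hxs, rfl⟩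
    exact absurd hbeats
      (not_lt.mpr (le_trans hle2 (le_trans (two_le_pathWidth a b xs hlen) hmem)))
end

section
/- Let G = (V, E) be a finite directed graph with distinct distinguished vertices a, b such that a has no incoming edges, b has no outgoing edges, E has no self-loops, and E is asymmetric, and let W be the weighted tournament graph constructed from G as described. If b is reachable from a in G, then a is the unique Schulze winner of W; in fact a beats every other candidate of W. -/
variable {V : Type*}

/-- Auxiliary: upper bound on path width from a uniform bound on weights. -/
lemma pathWidth_le' (μ : V → V → ℝ) (C : ℝ) (hC : 0 ≤ C) (h : ∀ x y, μ x y ≤ C) :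
    ∀ xs : List V, pathWidth μ xs ≤ C
  | [] => by simpa [pathWidth] using hC
  | [x] => by simpa [pathWidth] using hC
  | [x, y] => by simpa [pathWidth] using h x y
  | x :: y :: z :: rest => by
      rw [pathWidth]
      exact le_trans (min_le_right _ _) (pathWidth_le' μ C hC h (y :: z :: rest))

/-- Auxiliary: lower bound on path width. -/
lemma le_pathWidth' (μ : V → V → ℝ) (C : ℝ) :
    ∀ xs : List V, 2 ≤ xs.length → xs.Chain' (fun x y => C ≤ μ x y) → C ≤ pathWidth μ xs
  | [x, y], _, h => by
      rw [pathWidth]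
      exact (List.isChain_cons_cons.mp h).1
  | x :: y :: z :: rest, _, h => by
      rw [pathWidth]
      exact le_min (List.isChain_cons_cons.mp h).1
        (le_pathWidth' μ C (y :: z :: rest) (by simp) (List.isChain_cons_cons.mp h).2)

/-- Auxiliary: the width of a path is at most the weight of its last edge. -/
lemma pathWidth_le_lastEdge' (μ : V → V → ℝ) (C : ℝ) (P : V → V → Prop) (t : V) :
    ∀ xs : List V, 2 ≤ xs.length → xs.Chain' P → xs.getLast? = some t →
      (∀ x, P x t → μ x t ≤ C) → pathWidth μ xs ≤ C
  | [x, y], _, hc, hl, hlast => by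
      rw [pathWidth]
      obtain rfl : y = t := by simpa using hl
      exact hlast x (List.isChain_cons_cons.mp hc).1
  | x :: y :: z :: rest, _, hc, hl, hlast => by
      rw [pathWidth]
      refine le_trans (min_le_right _ _) ?_
      exact pathWidth_le_lastEdge' μ C P t (y :: z :: rest) (by simp)
        (List.isChain_cons_cons.mp hc).2 (by simpa [List.getLast?_cons_cons] using hl) hlast

theorem stmt_1 {V : Type*} [Fintype V] [DecidableEq V] (E : V → V → Prop) (a b : V)
    (hab : a ≠ b)
    (hirr : ∀ v, ¬ E v v)
    (hasym : ∀ x y, E x y → ¬ E y x)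
    (ha : ∀ v, ¬ E v a)
    (hb : ∀ v, ¬ E b v)
    (hreach : Relation.ReflTransGen E a b) :
    SchulzeWinner (WE E b) (WMu a b) (Sum.inl a) ∧
    (∀ c : V ⊕ {u : V // u ≠ b}, SchulzeWinner (WE E b) (WMu a b) c → c = Sum.inl a) ∧
    (∀ c : V ⊕ {u : V // u ≠ b}, c ≠ Sum.inl a → Beats (WE E b) (WMu a b) (Sum.inl a) c) := by
  classical
  set W := V ⊕ {u : V // u ≠ b} with hW
  -- all weights are at most 4
  have wle : ∀ x y : W, WMu a b x y ≤ 4 := by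
    rintro (x | u) (y | u') <;> simp [WMu] <;> split <;> norm_num
  -- edges into `Sum.inl a` have weight at most 2
  have hin : ∀ x : W, WE E b x (Sum.inl a) → WMu a b x (Sum.inl a) ≤ 2 := by
    rintro (v | u) h
    · exact absurd h (ha v)
    · have : u.1 = a := h.symm
      simp [WMu, this]
  -- upper bound: any path into `Sum.inl a` has width at most 2
  have hup : ∀ c : W, widestPath (WE E b) (WMu a b) c (Sum.inl a) ≤ 2 := by
    intro c
    apply Real.sSup_le _ (by norm_num)
    rintro w ⟨xs, ⟨hc, hh, hl⟩, rfl⟩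
    match xs, hc, hh, hl with
    | [x], hc, hh, hl =>
      norm_num [pathWidth]
    | x :: y :: rest, hc, hh, hl =>
      exact pathWidth_le_lastEdge' _ 2 (WE E b) (Sum.inl a) _ (by simp) hc hl hin
  -- a concrete list realizing reachability from a to b
  obtain ⟨l, hchain, hlast⟩ := List.exists_isChain_cons_of_relationReflTransGen hreach
  have hlne : l ≠ [] := by
    rintro rfl
    simp at hlast
    exact hab hlast
  obtain ⟨l0, l', rfl⟩ : ∃ l0 l'', l = l0 :: l'' := by
    cases l with
    | nil => exact absurd rfl hlne
    | cons x t => exact ⟨x, t, rfl⟩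
  set xs0 : List W := (a :: l0 :: l').map Sum.inl with hxs0
  have hxs0chain : xs0.Chain' (WE E b) := by
    rw [hxs0]; show List.IsChain _ _; rw [List.isChain_map]
    exact hchain
  have hxs0w : xs0.Chain' (fun x y => (4:ℝ) ≤ WMu a b x y) := by
    rw [hxs0]; show List.IsChain _ _; rw [List.isChain_map]
    refine List.IsChain.imp ?_ (show List.IsChain E (a :: l0 :: l') from hchain)
    intro x y _
    simp [WMu]
  have hxs0head : xs0.head? = some (Sum.inl a) := rfl
  have hxs0last : xs0.getLast? = some (Sum.inl b) := by
    rw [hxs0, List.getLast?_map]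
    rw [List.getLast?_eq_getLast (List.cons_ne_nil _ _)]
    exact congrArg (fun z => some (Sum.inl z)) hlast
  -- bounded above
  have hbdd : ∀ c : W, BddAbove {w : ℝ | ∃ xs : List W,
      IsPath (WE E b) (Sum.inl a) c xs ∧ pathWidth (WMu a b) xs = w} := by
    intro c
    refine ⟨4, ?_⟩
    rintro w ⟨xs, _, rfl⟩
    exact pathWidth_le' _ 4 (by norm_num) wle xs
  -- lower bound: from a there is a path of width 4 to every other vertex
  have hlow : ∀ c : W, c ≠ Sum.inl a → 4 ≤ widestPath (WE E b) (WMu a b) (Sum.inl a) c := by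
    intro c hc
    have key : ∃ xs : List W, IsPath (WE E b) (Sum.inl a) c xs ∧
        xs.Chain' (fun x y => (4:ℝ) ≤ WMu a b x y) ∧ 2 ≤ xs.length := by
      match c with
      | Sum.inr u =>
        refine ⟨xs0 ++ [Sum.inr u], ⟨?_, ?_, ?_⟩, ?_, by simp [hxs0]⟩
        · show List.IsChain _ _; rw [List.isChain_append]
          refine ⟨hxs0chain, by simp, ?_⟩
          intro x hx y hy
          rw [hxs0last] at hx
          simp at hx hy
          subst hx; subst hy
          show b = b
          rfl
        · simp [hxs0]
        · simp
        · show List.IsChain _ _; rw [List.isChain_append]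
          refine ⟨hxs0w, by simp, ?_⟩
          intro x hx y hy
          rw [hxs0last] at hx
          simp at hx hy
          subst hx; subst hy
          simp [WMu]
      | Sum.inl v =>
        have hva : v ≠ a := fun h => hc (by rw [h])
        by_cases hvb : v = b
        · subst hvb
          refine ⟨xs0, ⟨hxs0chain, hxs0head, hxs0last⟩, hxs0w, by simp [hxs0]⟩
        · refine ⟨xs0 ++ [Sum.inr ⟨v, hvb⟩, Sum.inl v], ⟨?_, ?_, ?_⟩, ?_, by simp [hxs0]⟩
          · show List.IsChain _ _; rw [List.isChain_append]
            refine ⟨hxs0chain, ?_, ?_⟩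
            · rw [List.isChain_cons_cons]
              exact ⟨rfl, by simp⟩
            · intro x hx y hy
              rw [hxs0last] at hx
              simp at hx hy
              subst hx; subst hy
              show b = b
              rfl
          · simp [hxs0]
          · simp
          · show List.IsChain _ _; rw [List.isChain_append]
            refine ⟨hxs0w, ?_, ?_⟩
            · rw [List.isChain_cons_cons]
              refine ⟨?_, by simp [hxs0]⟩
              simp [WMu, hva]
            · intro x hx y hy
              rw [hxs0last] at hx
              simp at hx hy
              subst hx; subst hy
              simp [WMu]
    obtain ⟨xs, hpath, hwchain, hlen⟩ := key
    have h4 : pathWidth (WMu a b) xs = 4 :=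
      le_antisymm (pathWidth_le' _ 4 (by norm_num) wle xs) (le_pathWidth' _ 4 xs hlen hwchain)
    exact le_csSup (hbdd c) ⟨xs, hpath, h4⟩
  have hbeats : ∀ c : W, c ≠ Sum.inl a → Beats (WE E b) (WMu a b) (Sum.inl a) c := by
    intro c hc
    exact lt_of_le_of_lt (hup c) (lt_of_lt_of_le (by norm_num) (hlow c hc))
  refine ⟨?_, ?_, hbeats⟩
  · intro c hB
    by_cases h : c = Sum.inl a
    · subst h
      exact lt_irrefl _ hB
    · exact absurd hB (not_lt.2 (le_trans (hup c) (le_trans (by norm_num) (hlow c h))))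
  · intro c hSW
    by_contra h
    exact hSW (Sum.inl a) (hbeats c h)
end

section
/- Let G = (V, E) be a finite directed graph with distinct distinguished vertices a, b such that a has no incoming edges, b has no outgoing edges, E has no self-loops, and E is asymmetric, and let W be the weighted tournament graph constructed from G as described. Then every path in W ending at a uses the edge (r_a, a), hence p_W(v, a) ≤ 2 for every vertex v ≠ a of W; moreover p_W(b, a) = 2. -/
variable {V : Type*}

lemma width_le_of_suffix (μ : V → V → ℝ) (u v : V) :
    ∀ xs : List V, [u, v] <:+ xs → pathWidth μ xs ≤ μ u v := by
  intro xs
  induction xs with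
  | nil => rintro ⟨t, ht⟩; simp at ht
  | cons x rest ih =>
    rintro ⟨t, ht⟩
    cases t with
    | nil =>
      simp at ht
      obtain ⟨rfl, rfl⟩ := ht
      simp [pathWidth]
    | cons w t' =>
      simp at ht
      obtain ⟨rfl, ht'⟩ := ht
      rcases rest with _ | ⟨y, _ | ⟨z, r⟩⟩
      · simp at ht'
      · have := congrArg List.length ht'; simp at this
      · have h2 := ih ⟨t', ht'⟩
        simp only [pathWidth]
        exact le_trans (min_le_right _ _) h2

lemma last_edge (E : V → V → Prop) (a b : V) (hab : a ≠ b)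
    (ha : ∀ v, ¬ E v a) :
    ∀ xs : List (V ⊕ {u : V // u ≠ b}), xs.Chain' (WE E b) →
      xs.getLast? = some (Sum.inl a) → 2 ≤ xs.length →
      [Sum.inr ⟨a, hab⟩, Sum.inl a] <:+ xs := by
  intro xs
  induction xs with
  | nil => simp
  | cons x rest ih =>
    intro hch hlast hlen
    cases rest with
    | nil => simp at hlen
    | cons y rest' =>
      cases rest' with
      | nil =>
        simp at hlast
        subst hlast
        have hxy : WE E b x (Sum.inl a) := (List.isChain_cons_cons.mp hch).1
        match x, hxy with
        | Sum.inl v, hxy => exact absurd hxy (ha v)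
        | Sum.inr u, hxy =>
          have hu : u = ⟨a, hab⟩ := Subtype.ext hxy.symm
          subst hu
          exact List.suffix_refl _
      | cons z rest'' =>
        have h := ih (List.isChain_cons_cons.mp hch).2 (by simpa using hlast) (by simp)
        exact h.trans (List.suffix_cons _ _)


theorem stmt_2 {V : Type*} [Fintype V] [DecidableEq V] (E : V → V → Prop) (a b : V)
    (hab : a ≠ b)
    (hirr : ∀ v, ¬ E v v)
    (hasym : ∀ x y, E x y → ¬ E y x)
    (ha : ∀ v, ¬ E v a)
    (hb : ∀ v, ¬ E b v) :
    (∀ (x : V ⊕ {u : V // u ≠ b}) (xs : List (V ⊕ {u : V // u ≠ b})),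
        IsPath (WE E b) x (Sum.inl a) xs → 2 ≤ xs.length →
        [Sum.inr ⟨a, hab⟩, Sum.inl a] <:+: xs) ∧
    (∀ x : V ⊕ {u : V // u ≠ b}, x ≠ Sum.inl a →
        widestPath (WE E b) (WMu a b) x (Sum.inl a) ≤ 2) ∧
    widestPath (WE E b) (WMu a b) (Sum.inl b) (Sum.inl a) = 2 := by
  have hbound : ∀ x : V ⊕ {u : V // u ≠ b}, x ≠ Sum.inl a →
      ∀ w ∈ {w : ℝ | ∃ xs, IsPath (WE E b) x (Sum.inl a) xs ∧ pathWidth (WMu a b) xs = w},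
      w ≤ 2 := by
    intro x hx w hw
    obtain ⟨xs, ⟨hch, hhead, hlast⟩, rfl⟩ := hw
    have hlen : 2 ≤ xs.length := by
      rcases xs with _ | ⟨y, _ | ⟨z, r⟩⟩
      · simp at hhead
      · simp at hhead hlast
        subst hhead; subst hlast
        exact absurd rfl hx
      · simp
    have hsuf := last_edge E a b hab ha xs hch hlast hlen
    have h := width_le_of_suffix (WMu a b) _ _ xs hsuf
    calc pathWidth (WMu a b) xs ≤ WMu a b (Sum.inr ⟨a, hab⟩) (Sum.inl a) := h
      _ = 2 := by simp [WMu]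
  refine ⟨?_, ?_, ?_⟩
  · intro x xs hp hlen
    exact (last_edge E a b hab ha xs hp.1 hp.2.2 hlen).isInfix
  · intro x hx
    exact Real.sSup_le (hbound x hx) (by norm_num)
  · have hmem : (2:ℝ) ∈ {w : ℝ | ∃ xs, IsPath (WE E b) (Sum.inl b) (Sum.inl a) xs ∧
        pathWidth (WMu a b) xs = w} := by
      refine ⟨[Sum.inl b, Sum.inr ⟨a, hab⟩, Sum.inl a], ⟨?_, rfl, rfl⟩, ?_⟩
      · simp [List.Chain', List.isChain_cons_cons, WE]
      · simp [pathWidth, WMu]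
        norm_num
    have hx : (Sum.inl b : V ⊕ {u : V // u ≠ b}) ≠ Sum.inl a := by
      simp [hab.symm]
    exact le_antisymm (Real.sSup_le (hbound _ hx) (by norm_num))
      (le_csSup ⟨2, hbound _ hx⟩ hmem)
end

section
/- Let G = (V, E) be a finite directed graph with distinct distinguished vertices a, b such that a has no incoming edges, b has no outgoing edges, E has no self-loops, and E is asymmetric, and let W be the weighted tournament graph constructed from G as described. If b is reachable from a in G, then p_W(a, v) = 4 for every vertex v ≠ a of W. -/
variable {V : Type*}

lemma aux_chain_exists {V : Type*} (E : V → V → Prop) {a b : V}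
    (h : Relation.ReflTransGen E a b) :
    ∃ xs : List V, xs.Chain' E ∧ xs.head? = some a ∧ xs.getLast? = some b ∧ xs ≠ [] := by
  induction h with
  | refl => exact ⟨[a], List.isChain_singleton _, by simp, by simp, by simp⟩
  | @tail c d h e ih =>
    obtain ⟨xs, hc, hh, hl, hne⟩ := ih
    refine ⟨xs ++ [d], ?_, ?_, ?_, by simp⟩
    · refine hc.append (List.isChain_singleton _) ?_
      intro p hp q hq
      rw [hl] at hp
      simp only [Option.mem_def, Option.some.injEq, List.head?_cons] at hp hq
      subst hp; subst hq; exact e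
    · rw [List.head?_append, hh]; rfl
    · simp

lemma aux_pathWidth_le_four {V : Type*} (μ : V → V → ℝ) (hμ : ∀ x y, μ x y ≤ 4) :
    ∀ xs : List V, pathWidth μ xs ≤ 4
  | [] => by simp [pathWidth]
  | [x] => by simp [pathWidth]
  | [x, y] => hμ x y
  | x :: y :: z :: rest => by
    simp only [pathWidth]
    exact min_le_of_left_le (hμ x y)

lemma aux_pathWidth_eq_four {V : Type*} (μ : V → V → ℝ) :
    ∀ xs : List V, 2 ≤ xs.length → xs.Chain' (fun x y => μ x y = 4) →
      pathWidth μ xs = 4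
  | [x, y], _, h => by
    simp only [List.Chain', List.isChain_cons_cons, List.isChain_singleton, and_true] at h
    exact h
  | x :: y :: z :: rest, _, h => by
    rw [List.Chain', List.isChain_cons_cons] at h
    simp only [pathWidth]
    rw [h.1, aux_pathWidth_eq_four μ (y :: z :: rest) (by simp) h.2]
    simp

theorem stmt_3 {V : Type*} [Fintype V] [DecidableEq V] (E : V → V → Prop) (a b : V)
    (hab : a ≠ b)
    (hirr : ∀ v, ¬ E v v)
    (hasym : ∀ x y, E x y → ¬ E y x)
    (ha : ∀ v, ¬ E v a)
    (hb : ∀ v, ¬ E b v)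
    (hreach : Relation.ReflTransGen E a b) :
    ∀ x : V ⊕ {u : V // u ≠ b}, x ≠ Sum.inl a →
      widestPath (WE E b) (WMu a b) (Sum.inl a) x = 4 := by
  have hμle : ∀ x y, WMu a b x y ≤ 4 := by
    intro x y
    rcases x with x | u
    · rcases y with y | v <;> norm_num [WMu]
    · rcases y with y | v
      · simp only [WMu]; split <;> norm_num
      · norm_num [WMu]
  -- a chain from a to b in E
  obtain ⟨xs, hc, hh, hl, hne⟩ := aux_chain_exists E hreach
  have hlen2 : 2 ≤ xs.length := by
    match xs, hh, hl, hne with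
    | [x], hh, hl, _ =>
      simp only [List.head?_cons, List.getLast?_singleton, Option.some.injEq] at hh hl
      exact absurd (hh.symm.trans hl) hab
    | x :: y :: t, _, _, _ => simp
  set R : (V ⊕ {u : V // u ≠ b}) → (V ⊕ {u : V // u ≠ b}) → Prop :=
    fun p q => WE E b p q ∧ WMu a b p q = 4 with hR
  intro x hx
  have key : ∀ ys : List (V ⊕ {u : V // u ≠ b}), ys.Chain' R →
      ys.head? = some (Sum.inl a) → ys.getLast? = some x → 2 ≤ ys.length →
      widestPath (WE E b) (WMu a b) (Sum.inl a) x = 4 := by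
    intro ys hcR hhy hly hleny
    have hmem : (4:ℝ) ∈ {w : ℝ | ∃ zs, IsPath (WE E b) (Sum.inl a) x zs ∧
        pathWidth (WMu a b) zs = w} :=
      ⟨ys, ⟨hcR.imp fun _ _ h => h.1, hhy, hly⟩,
        aux_pathWidth_eq_four _ ys hleny (hcR.imp fun _ _ h => h.2)⟩
    have hbdd : ∀ w ∈ {w : ℝ | ∃ zs, IsPath (WE E b) (Sum.inl a) x zs ∧
        pathWidth (WMu a b) zs = w}, w ≤ 4 := by
      rintro w ⟨zs, _, rfl⟩
      exact aux_pathWidth_le_four _ hμle zs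
    exact le_antisymm (csSup_le ⟨4, hmem⟩ hbdd) (le_csSup ⟨4, hbdd⟩ hmem)
  have hmapR : (xs.map Sum.inl : List (V ⊕ {u : V // u ≠ b})).Chain' R := by
    rw [List.Chain', List.isChain_map]
    exact hc.imp fun _ _ h => ⟨h, rfl⟩
  have hmaph : (xs.map Sum.inl : List (V ⊕ {u : V // u ≠ b})).head? = some (Sum.inl a) := by
    rw [List.head?_map, hh]; rfl
  have hmapl : (xs.map Sum.inl : List (V ⊕ {u : V // u ≠ b})).getLast? = some (Sum.inl b) := by
    rw [List.getLast?_map, hl]; rfl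
  have hmaplen : 2 ≤ (xs.map Sum.inl : List (V ⊕ {u : V // u ≠ b})).length := by
    simpa using hlen2
  rcases x with v | u
  · have hva : v ≠ a := fun h => hx (by rw [h])
    by_cases hvb : v = b
    · subst hvb
      exact key (xs.map Sum.inl) hmapR hmaph hmapl hmaplen
    · refine key (xs.map Sum.inl ++ [Sum.inr ⟨v, hvb⟩, Sum.inl v]) ?_ ?_ ?_ ?_
      · refine hmapR.append ?_ ?_
        · refine List.isChain_cons_cons.2 ⟨⟨rfl, ?_⟩, List.isChain_singleton _⟩
          simp only [WMu]
          rw [if_neg]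
          rintro ⟨h1, _⟩; exact hva h1
        · intro p hp q hq
          rw [hmapl] at hp
          simp only [Option.mem_def, Option.some.injEq, List.head?_cons] at hp hq
          subst hp; subst hq
          exact ⟨rfl, rfl⟩
      · rw [List.head?_append, hmaph]; rfl
      · simp
      · simp
  · refine key (xs.map Sum.inl ++ [Sum.inr u]) ?_ ?_ ?_ ?_
    · refine hmapR.append (List.isChain_singleton _) ?_
      intro p hp q hq
      rw [hmapl] at hp
      simp only [Option.mem_def, Option.some.injEq, List.head?_cons] at hp hq
      subst hp; subst hq
      exact ⟨rfl, rfl⟩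
    · rw [List.head?_append, hmaph]; rfl
    · simp
    · simp; omega
end

section
/- Let G = (V, E) be a finite directed graph with distinct distinguished vertices a, b such that a has no incoming edges, b has no outgoing edges, E has no self-loops, and E is asymmetric, and let W be the weighted tournament graph constructed from G as described. Then b is reachable from a in W if and only if b is reachable from a in G. -/
variable {V : Type*}

theorem stmt_4 {V : Type*} [Fintype V] [DecidableEq V] (E : V → V → Prop) (a b : V)
    (hab : a ≠ b)
    (hirr : ∀ v, ¬ E v v)
    (hasym : ∀ x y, E x y → ¬ E y x)
    (ha : ∀ v, ¬ E v a)
    (hb : ∀ v, ¬ E b v) :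
    Relation.ReflTransGen (WE E b) (Sum.inl a) (Sum.inl b) ↔ Relation.ReflTransGen E a b := by
  constructor
  · intro h
    have inv : ∀ w, Relation.ReflTransGen (WE E b) (Sum.inl a) w →
        (∀ x, w = Sum.inl x → (Relation.ReflTransGen E a x ∨ Relation.ReflTransGen E a b)) ∧
        (∀ u : {u : V // u ≠ b}, w = Sum.inr u → Relation.ReflTransGen E a b) := by
      intro w hw
      induction hw with
      | refl =>
        exact ⟨fun x hx => Or.inl (by cases hx; exact .refl), fun u hu => by cases hu⟩
      | tail hcd hed ih =>
        rename_i c d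
        rcases c with x | u <;> rcases d with y | u'
        · refine ⟨fun z hz => ?_, fun u hu => by cases hu⟩
          cases hz
          rcases (ih.1 x rfl) with h1 | h1
          · exact Or.inl (h1.tail hed)
          · exact Or.inr h1
        · refine ⟨fun z hz => absurd hz (by simp), fun u hu => ?_⟩
          have : x = b := hed
          rcases ih.1 x rfl with h1 | h1
          · exact this ▸ h1
          · exact h1
        · refine ⟨fun z hz => ?_, fun u hu => by cases hu⟩
          exact Or.inr (ih.2 u rfl)
        · exact absurd hed (by simp [WE])
    rcases (inv _ h).1 b rfl with h1 | h1 <;> exact h1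
  · intro h
    exact Relation.ReflTransGen.lift Sum.inl (fun x y e => e) a b h
end

section
/- Let (A, E) be a finite directed graph, let id : A → ℕ be injective, and for each vertex c define s(c) = min{id(u) : u reaches c} and t(c) = min{id(u) : c reaches u}. If s(c) = t(c) = m for some vertex c, then the set {v ∈ A : s(v) = t(v) = m} is exactly the strongly connected component of c. -/
variable {V : Type*}

/-- `s(c)`: the minimum id among vertices that reach `c`. -/
noncomputable def minIdTo (E : V → V → Prop) (id : V → ℕ) (c : V) : ℕ :=
  sInf {n : ℕ | ∃ u : V, id u = n ∧ Relation.ReflTransGen E u c}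

/-- `t(c)`: the minimum id among vertices reached by `c`. -/
noncomputable def minIdFrom (E : V → V → Prop) (id : V → ℕ) (c : V) : ℕ :=
  sInf {n : ℕ | ∃ u : V, id u = n ∧ Relation.ReflTransGen E c u}

/-- The strongly connected component of `c`: all vertices mutually reachable with `c`. -/
def scc (E : V → V → Prop) (c : V) : Set V :=
  {v : V | Relation.ReflTransGen E c v ∧ Relation.ReflTransGen E v c}

lemma minIdTo_attained (E : V → V → Prop) (id : V → ℕ) (c : V) :
    ∃ u : V, id u = minIdTo E id c ∧ Relation.ReflTransGen E u c := by
  have hne : {n : ℕ | ∃ u : V, id u = n ∧ Relation.ReflTransGen E u c}.Nonempty :=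
    ⟨id c, c, rfl, Relation.ReflTransGen.refl⟩
  exact Nat.sInf_mem hne

lemma minIdFrom_attained (E : V → V → Prop) (id : V → ℕ) (c : V) :
    ∃ u : V, id u = minIdFrom E id c ∧ Relation.ReflTransGen E c u := by
  have hne : {n : ℕ | ∃ u : V, id u = n ∧ Relation.ReflTransGen E c u}.Nonempty :=
    ⟨id c, c, rfl, Relation.ReflTransGen.refl⟩
  exact Nat.sInf_mem hne

lemma minIdTo_congr (E : V → V → Prop) (id : V → ℕ) {c v : V}
    (h1 : Relation.ReflTransGen E c v) (h2 : Relation.ReflTransGen E v c) :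
    minIdTo E id v = minIdTo E id c := by
  unfold minIdTo
  congr 1
  ext n
  exact ⟨fun ⟨u, hu, huv⟩ => ⟨u, hu, huv.trans h2⟩,
    fun ⟨u, hu, huc⟩ => ⟨u, hu, huc.trans h1⟩⟩

lemma minIdFrom_congr (E : V → V → Prop) (id : V → ℕ) {c v : V}
    (h1 : Relation.ReflTransGen E c v) (h2 : Relation.ReflTransGen E v c) :
    minIdFrom E id v = minIdFrom E id c := by
  unfold minIdFrom
  congr 1
  ext n
  exact ⟨fun ⟨u, hu, hvu⟩ => ⟨u, hu, h1.trans hvu⟩,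
    fun ⟨u, hu, hcu⟩ => ⟨u, hu, h2.trans hcu⟩⟩

theorem stmt_7 {V : Type*} [Fintype V] (E : V → V → Prop) (id : V → ℕ)
    (hinj : Function.Injective id)
    (c : V) (m : ℕ)
    (hs : minIdTo E id c = m) (ht : minIdFrom E id c = m) :
    {v : V | minIdTo E id v = m ∧ minIdFrom E id v = m} = scc E c := by
  obtain ⟨a, ha, hac⟩ := minIdTo_attained E id c
  obtain ⟨b, hb, hcb⟩ := minIdFrom_attained E id c
  rw [hs] at ha; rw [ht] at hb
  have hab : a = b := hinj (ha.trans hb.symm)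
  subst hab
  -- a reaches c and c reaches a, id a = m
  ext v
  simp only [Set.mem_setOf_eq, scc]
  constructor
  · rintro ⟨hsv, htv⟩
    obtain ⟨p, hp, hpv⟩ := minIdTo_attained E id v
    obtain ⟨q, hq, hvq⟩ := minIdFrom_attained E id v
    rw [hsv] at hp; rw [htv] at hq
    have hpa : p = a := hinj (hp.trans ha.symm)
    have hqa : q = a := hinj (hq.trans ha.symm)
    subst hpa; subst hqa
    exact ⟨hcb.trans hpv, hvq.trans hac⟩
  · rintro ⟨hcv, hvc⟩
    rw [minIdTo_congr E id hcv hvc, minIdFrom_congr E id hcv hvc]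
    exact ⟨hs, ht⟩
end

section
/- Let (A, E, μ) be a weighted tournament graph, let id : A → ℕ be injective, and for each vertex c define s(c) = min{id(u) : u reaches c} and t(c) = min{id(u) : c reaches u}, where reachability is taken in the digraph (A, E). If s(c) < t(c) for a candidate c, then the vertex u with id(u) = s(c) reaches c but c does not reach u; consequently c is not a Schulze winner. -/
variable {V : Type*}

lemma pathWidth_le_aux (μ : V → V → ℝ) (M : ℝ) (hM : ∀ x y, μ x y ≤ M) :
    ∀ xs : List V, pathWidth μ xs ≤ max M 0
  | [] => by simp [pathWidth]
  | [_] => by simp [pathWidth]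
  | [x, y] => by simpa [pathWidth] using le_max_of_le_left (hM x y)
  | x :: y :: z :: rest => by
      have h := pathWidth_le_aux μ M hM (y :: z :: rest)
      calc pathWidth μ (x :: y :: z :: rest) ≤ pathWidth μ (y :: z :: rest) := by
            simp [pathWidth]
        _ ≤ max M 0 := h

lemma pathWidth_pos_aux (E : V → V → Prop) (μ : V → V → ℝ)
    (hpos : ∀ x y, E x y → 0 < μ x y) :
    ∀ (x y : V) (rest : List V), List.Chain' E (x :: y :: rest) →
      0 < pathWidth μ (x :: y :: rest)
  | x, y, [], h => by
      simpa [pathWidth] using hpos x y (List.isChain_cons_cons.mp h).1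
  | x, y, z :: rest, h => by
      have h1 : E x y := (List.isChain_cons_cons.mp h).1
      have h2 := pathWidth_pos_aux E μ hpos y z rest (List.isChain_cons_cons.mp h).2
      simpa [pathWidth] using lt_min (hpos x y h1) h2

lemma isPath_reflTransGen {E : V → V → Prop} {a b : V} {xs : List V}
    (h : IsPath E a b xs) : Relation.ReflTransGen E a b := by
  obtain ⟨hc, hh, hl⟩ := h
  cases xs with
  | nil => simp at hh
  | cons x l =>
    simp at hh
    subst hh
    refine List.relationReflTransGen_of_exists_isChain_cons l hc ?_
    have := List.getLast?_eq_getLast (l := x :: l) (List.cons_ne_nil _ _)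
    rw [this] at hl
    exact Option.some_injective _ hl

theorem stmt_9 {A : Type*} [Fintype A] (E : A → A → Prop) (μ : A → A → ℝ)
    (hirr : ∀ x, ¬ E x x)
    (hpos : ∀ x y, E x y → 0 < μ x y)
    (id : A → ℕ) (hinj : Function.Injective id)
    (c : A) (hlt : minIdTo E id c < minIdFrom E id c) :
    (∃ u : A, id u = minIdTo E id c ∧
        Relation.ReflTransGen E u c ∧ ¬ Relation.ReflTransGen E c u) ∧
    ¬ SchulzeWinner E μ c := by
  have hne : {n : ℕ | ∃ u : A, id u = n ∧ Relation.ReflTransGen E u c}.Nonempty :=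
    ⟨id c, c, rfl, Relation.ReflTransGen.refl⟩
  obtain ⟨u, hu, huc⟩ := Nat.sInf_mem hne
  have hcu : ¬ Relation.ReflTransGen E c u := by
    intro h
    have h2 : minIdFrom E id c ≤ minIdTo E id c :=
      le_of_le_of_eq (Nat.sInf_le ⟨u, rfl, h⟩) hu
    omega
  have hnec : u ≠ c := fun h => hcu (h ▸ Relation.ReflTransGen.refl)
  refine ⟨⟨u, hu, huc, hcu⟩, ?_⟩
  intro hw
  apply hw u
  -- widestPath E μ c u = 0
  have hempty : {w : ℝ | ∃ xs : List A, IsPath E c u xs ∧ pathWidth μ xs = w} = ∅ := by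
    ext w
    simp only [Set.mem_setOf_eq, Set.mem_empty_iff_false, iff_false]
    rintro ⟨xs, hp, -⟩
    exact hcu (isPath_reflTransGen hp)
  have h0 : widestPath E μ c u = 0 := by
    rw [widestPath, hempty, Real.sSup_empty]
  -- build a path from u to c
  obtain ⟨l, hchain, hlast⟩ := List.exists_isChain_cons_of_relationReflTransGen huc
  have hlnil : l ≠ [] := by
    rintro rfl
    exact hnec (by simpa using hlast)
  obtain ⟨y, l', rfl⟩ := List.exists_cons_of_ne_nil hlnil
  have hpath : IsPath E u c (u :: y :: l') := by
    refine ⟨hchain, rfl, ?_⟩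
    rw [List.getLast?_eq_getLast (List.cons_ne_nil _ _), hlast]
  have hwpos : 0 < pathWidth μ (u :: y :: l') :=
    pathWidth_pos_aux E μ hpos u y l' hchain
  -- bounded above
  have : Nonempty A := ⟨c⟩
  set M : ℝ := Finset.univ.sup' (Finset.univ_nonempty) (fun p : A × A => μ p.1 p.2) with hM
  have hMb : ∀ x y : A, μ x y ≤ M := fun x y =>
    Finset.le_sup' (fun p : A × A => μ p.1 p.2) (Finset.mem_univ (x, y))
  have hbdd : BddAbove {w : ℝ | ∃ xs : List A, IsPath E u c xs ∧ pathWidth μ xs = w} := by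
    refine ⟨max M 0, ?_⟩
    rintro w ⟨xs, -, rfl⟩
    exact pathWidth_le_aux μ M hMb xs
  have hle : pathWidth μ (u :: y :: l') ≤ widestPath E μ u c :=
    le_csSup hbdd ⟨u :: y :: l', hpath, rfl⟩
  rw [Beats, h0]
  linarith
end

section
/- Let (A, E, μ) be a weighted tournament graph, let c be a candidate and let S be the strongly connected component of c in the digraph (A, E). If there is no edge (w, u) ∈ E with w ∉ S and u ∈ S, and if p(c, v) ≥ p(v, c) for every candidate v ∈ S with v ≠ c, then c is a Schulze winner. -/
variable {V : Type*}

lemma pathWidth_le_max {μ : V → V → ℝ} {M : ℝ} (h : ∀ x y, μ x y ≤ M) :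
    ∀ xs : List V, pathWidth μ xs ≤ max 0 M
  | [] => by simp [pathWidth]
  | [x] => by simp [pathWidth]
  | [x, y] => by simpa [pathWidth] using le_max_of_le_right (h x y)
  | x :: y :: z :: rest => by
    simp only [pathWidth]
    exact (min_le_left _ _).trans (le_max_of_le_right (h x y))

lemma pathWidth_nonneg {E : V → V → Prop} {μ : V → V → ℝ}
    (hpos : ∀ x y, E x y → 0 < μ x y) :
    ∀ xs : List V, xs.Chain' E → 0 ≤ pathWidth μ xs
  | [] , _ => le_refl 0
  | [x], _ => le_refl 0
  | [x, y], h => by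
    replace h := (List.isChain_cons_cons.mp h).1
    exact (hpos x y h).le
  | x :: y :: z :: rest, h => by
    obtain ⟨h1, h2⟩ := List.isChain_cons_cons.mp h
    exact le_min (hpos _ _ h1).le (pathWidth_nonneg hpos (y :: z :: rest) h2)

lemma chain_reach {E : V → V → Prop} :
    ∀ (xs : List V) (a b : V), xs.Chain' E → xs.head? = some a →
      xs.getLast? = some b → Relation.ReflTransGen E a b
  | [], _, _, _, h, _ => by simp at h
  | [x], a, b, _, hh, hl => by
    simp only [List.head?, Option.some.injEq] at hh
    simp only [List.getLast?, Option.some.injEq] at hl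
    subst hh; subst hl; exact Relation.ReflTransGen.refl
  | x :: y :: rest, a, b, hch, hh, hl => by
    simp only [List.head?, Option.some.injEq] at hh
    subst hh
    obtain ⟨h1, h2⟩ := List.isChain_cons_cons.mp hch
    have hl' : (y :: rest).getLast? = some b := by
      rwa [List.getLast?_cons_cons] at hl
    exact Relation.ReflTransGen.head h1 (chain_reach (y :: rest) y b h2 rfl hl')

lemma reach_mem_scc {E : V → V → Prop} {c b : V}
    (hnoin : ∀ w u, u ∈ scc E c → w ∉ scc E c → ¬ E w u)
    (h : Relation.ReflTransGen E b c) : b ∈ scc E c := by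
  induction h using Relation.ReflTransGen.head_induction_on with
  | refl => exact ⟨Relation.ReflTransGen.refl, Relation.ReflTransGen.refl⟩
  | head hab _ ih =>
    by_contra hb
    exact hnoin _ _ ih hb hab

theorem stmt_12 {A : Type*} [Fintype A] (E : A → A → Prop) (μ : A → A → ℝ)
    (hirr : ∀ x, ¬ E x x)
    (hpos : ∀ x y, E x y → 0 < μ x y)
    (c : A)
    (hnoin : ∀ w u, u ∈ scc E c → w ∉ scc E c → ¬ E w u)
    (hwide : ∀ v ∈ scc E c, v ≠ c → widestPath E μ v c ≤ widestPath E μ c v) :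
    SchulzeWinner E μ c := by
  have hne : (Finset.univ : Finset (A × A)).Nonempty := ⟨(c, c), Finset.mem_univ _⟩
  set M : ℝ := Finset.univ.sup' hne (fun p : A × A => μ p.1 p.2) with hM
  have hMle : ∀ x y : A, μ x y ≤ M := fun x y =>
    Finset.le_sup' (f := fun p : A × A => μ p.1 p.2) (Finset.mem_univ (x, y))
  have hbdd : ∀ a b : A, BddAbove {w : ℝ | ∃ xs : List A, IsPath E a b xs ∧ pathWidth μ xs = w} := by
    intro a b
    refine ⟨max 0 M, fun w hw => ?_⟩
    obtain ⟨xs, _, rfl⟩ := hw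
    exact pathWidth_le_max hMle xs
  have hnn : ∀ a b : A, 0 ≤ widestPath E μ a b := by
    intro a b
    rcases Set.eq_empty_or_nonempty
      {w : ℝ | ∃ xs : List A, IsPath E a b xs ∧ pathWidth μ xs = w} with he | ⟨w, hw⟩
    · rw [widestPath, he, Real.sSup_empty]
    · obtain ⟨xs, hp, hweq⟩ := hw
      have h0 : 0 ≤ w := hweq ▸ pathWidth_nonneg hpos xs hp.1
      exact h0.trans (le_csSup (hbdd a b) ⟨xs, hp, hweq⟩)
  intro b hb
  rw [Beats] at hb
  by_cases hbs : b ∈ scc E c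
  · by_cases hbc : b = c
    · subst hbc; exact lt_irrefl _ hb
    · exact absurd hb (not_lt.mpr (hwide b hbs hbc))
  · have hzero : widestPath E μ b c = 0 := by
      have he : {w : ℝ | ∃ xs : List A, IsPath E b c xs ∧ pathWidth μ xs = w} = ∅ := by
        ext w
        simp only [Set.mem_setOf_eq, Set.mem_empty_iff_false, iff_false, not_exists]
        rintro xs ⟨⟨hch, hh, hl⟩, _⟩
        exact hbs (reach_mem_scc hnoin (chain_reach xs b c hch hh hl))
      rw [widestPath, he, Real.sSup_empty]
    rw [hzero] at hb
    exact absurd hb (not_lt.mpr (hnn c b))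
end

section
/- Let (A, E, μ) be a weighted tournament graph. Every Schulze winner of (A, E, μ) belongs to the Schwartz set of the digraph (A, E), i.e., the strongly connected component of a Schulze winner has no incoming edge from outside it. -/
variable {V : Type*}

/-- A chain' list yields reflexive-transitive reachability from head to last. -/
lemma chain'_to_rtg (E : V → V → Prop) :
    ∀ (xs : List V) (a b : V), xs.Chain' E → xs.head? = some a →
      xs.getLast? = some b → Relation.ReflTransGen E a b := by
  intro xs
  induction xs with
  | nil => intro a b _ h; simp at h
  | cons x t ih =>
    intro a b hc hh hl
    simp at hh; subst hh
    cases t with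
    | nil => simp at hl; subst hl; exact Relation.ReflTransGen.refl
    | cons y t2 =>
      rw [List.Chain', List.isChain_cons_cons] at hc
      have h1 : Relation.ReflTransGen E y b := by
        apply ih y b hc.2 rfl
        simpa [List.getLast?_cons_cons] using hl
      exact Relation.ReflTransGen.head hc.1 h1

/-- Reachability yields a chain' list from a to b. -/
lemma rtg_to_chain' (E : V → V → Prop) {a b : V} (h : Relation.ReflTransGen E a b) :
    ∃ xs : List V, xs.Chain' E ∧ xs.head? = some a ∧ xs.getLast? = some b := by
  induction h with
  | refl => exact ⟨[a], List.isChain_singleton a, by simp, by simp⟩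
  | @tail m n hmn hE ih =>
    obtain ⟨xs, hc, hh, hl⟩ := ih
    refine ⟨xs ++ [n], ?_, ?_, ?_⟩
    · rw [List.Chain', List.isChain_append]
      refine ⟨hc, by simp, ?_⟩
      intro x hx y hy
      simp at hy; subst hy
      rw [hl] at hx; simp at hx; subst hx; exact hE
    · cases xs with
      | nil => simp at hh
      | cons z t => simpa using hh
    · simp

lemma pathWidth_pos {A : Type*} (E : A → A → Prop) (μ : A → A → ℝ)
    (hpos : ∀ x y, E x y → 0 < μ x y) :
    ∀ xs : List A, xs.Chain' E → 2 ≤ xs.length → 0 < pathWidth μ xs := by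
  intro xs
  induction xs with
  | nil => simp
  | cons x t ih =>
    cases t with
    | nil => simp
    | cons y t2 =>
      cases t2 with
      | nil =>
        intro hc _
        rw [List.Chain', List.isChain_cons_cons] at hc
        simpa [pathWidth] using hpos _ _ hc.1
      | cons z r =>
        intro hc _
        rw [List.Chain', List.isChain_cons_cons] at hc
        have : pathWidth μ (x :: y :: z :: r) = min (μ x y) (pathWidth μ (y :: z :: r)) := rfl
        rw [this]
        exact lt_min (hpos _ _ hc.1) (ih hc.2 (by simp))

lemma pathWidth_le {A : Type*} (μ : A → A → ℝ) (B : ℝ) (hB : 0 ≤ B)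
    (hμB : ∀ x y : A, μ x y ≤ B) :
    ∀ xs : List A, pathWidth μ xs ≤ B := by
  intro xs
  induction xs with
  | nil => simpa [pathWidth]
  | cons x t ih =>
    cases t with
    | nil => simpa [pathWidth]
    | cons y t2 =>
      cases t2 with
      | nil => simpa [pathWidth] using hμB x y
      | cons z r =>
        have : pathWidth μ (x :: y :: z :: r) = min (μ x y) (pathWidth μ (y :: z :: r)) := rfl
        rw [this]
        exact le_trans (min_le_left _ _) (hμB x y)

theorem stmt_13 {A : Type*} [Fintype A] (E : A → A → Prop) (μ : A → A → ℝ)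
    (hirr : ∀ x, ¬ E x x)
    (hpos : ∀ x y, E x y → 0 < μ x y)
    (c : A) (hwin : SchulzeWinner E μ c) :
    ∀ w u, u ∈ scc E c → w ∉ scc E c → ¬ E w u := by
  intro w u hu hw hE
  obtain ⟨hcu, huc⟩ := hu
  -- w reaches c
  have hwc : Relation.ReflTransGen E w c := Relation.ReflTransGen.head hE huc
  -- c does not reach w
  have hcw : ¬ Relation.ReflTransGen E c w := fun h => hw ⟨h, hwc⟩
  -- widestPath E μ c w = 0 since the set is empty
  have hset : {x : ℝ | ∃ xs : List A, IsPath E c w xs ∧ pathWidth μ xs = x} = ∅ := by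
    ext x
    simp only [Set.mem_setOf_eq, Set.mem_empty_iff_false, iff_false]
    rintro ⟨xs, ⟨hc1, hh, hl⟩, -⟩
    exact hcw (chain'_to_rtg E xs c w hc1 hh hl)
  have hzero : widestPath E μ c w = 0 := by
    rw [widestPath, hset, Real.sSup_empty]
  -- build a positive-width path from w to c
  obtain ⟨xs, hc1, hh, hl⟩ := rtg_to_chain' E huc
  have hne : xs ≠ [] := by intro h; subst h; simp at hh
  set ys := w :: xs with hys
  have hcys : ys.Chain' E := by
    rw [hys, List.Chain', List.isChain_cons]
    refine ⟨?_, hc1⟩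
    intro y hy
    rw [hh] at hy; simp at hy; subst hy; exact hE
  have hPath : IsPath E w c ys := by
    refine ⟨hcys, by simp [hys], ?_⟩
    rw [hys, List.getLast?_cons, hl]
    cases xs with
    | nil => simp at hh
    | cons z t => simp
  have hlen : 2 ≤ ys.length := by
    rw [hys]
    cases xs with
    | nil => simp at hh
    | cons z t => simp
  have hwpos : 0 < pathWidth μ ys := pathWidth_pos E μ hpos ys hcys hlen
  -- bound above
  have hAne : Nonempty A := ⟨c⟩
  obtain ⟨B, hB⟩ : ∃ B : ℝ, 0 ≤ B ∧ ∀ x y : A, μ x y ≤ B := by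
    have hne' : (Finset.univ : Finset (A × A)).Nonempty := ⟨(c, c), Finset.mem_univ _⟩
    refine ⟨max 0 (Finset.univ.sup' hne' (fun p : A × A => μ p.1 p.2)), le_max_left _ _, ?_⟩
    intro x y
    exact le_trans (Finset.le_sup' (f := fun p : A × A => μ p.1 p.2)
      (Finset.mem_univ (x, y))) (le_max_right _ _)
  have hbdd : BddAbove {x : ℝ | ∃ xs : List A, IsPath E w c xs ∧ pathWidth μ xs = x} := by
    refine ⟨B, ?_⟩
    rintro x ⟨zs, -, rfl⟩
    exact pathWidth_le μ B hB.1 hB.2 zs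
  have hmem : pathWidth μ ys ∈ {x : ℝ | ∃ xs : List A, IsPath E w c xs ∧ pathWidth μ xs = x} :=
    ⟨ys, hPath, rfl⟩
  have hge : pathWidth μ ys ≤ widestPath E μ w c := le_csSup hbdd hmem
  exact hwin w (by rw [Beats, hzero]; linarith)
end

section
/- Let A be a finite set with at least two elements, let E ⊆ A × A be irreflexive and asymmetric (containing no self-loops and never both (a,b) and (b,a)), and let μ : E → ℕ assign to every edge a strictly positive even number. Then there exists a preference profile consisting of n = Σ_{e ∈ E} μ(e) linear orders ≻_1, …, ≻_n on A such that for all distinct a, b ∈ A, the majority margin |{i : a ≻_i b}| − |{i : b ≻_i a}| equals μ(a,b) if (a,b) ∈ E, equals −μ(b,a) if (b,a) ∈ E, and equals 0 otherwise. -/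
set_option linter.unusedSectionVars false
set_option linter.unusedVariables false
set_option linter.unusedTactic false
set_option maxHeartbeats 1000000

section McGarveyAux
variable {A : Type*} [DecidableEq A]

def mgF1 (enc : A → ℕ) (c d x : A) : ℕ :=
  if x = c then 0 else if x = d then 1 else enc x + 2

def mgF2 (enc : A → ℕ) (N : ℕ) (c d x : A) : ℕ :=
  if x = c then 2 * N else if x = d then 2 * N + 1 else N - enc x

lemma mgSTO (f : A → ℕ) (hf : Function.Injective f) :
    IsStrictTotalOrder A (fun x y => f x < f y) where
  trichotomous a b := by
    rcases lt_trichotomy (f a) (f b) with h | h | h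
    exacts [fun h1 _ => absurd h h1, fun _ _ => hf h, fun _ h2 => absurd h h2]
  irrefl a := lt_irrefl _
  trans a b c := Nat.lt_trans

lemma mgF1_inj (enc : A → ℕ) (hinj : Function.Injective enc) (c d : A) (hcd : c ≠ d) :
    Function.Injective (mgF1 enc c d) := by
  intro x y h
  simp only [mgF1] at h
  split_ifs at h <;> first | omega | exact hinj (by omega) | simp_all

lemma mgF2_inj (enc : A → ℕ) (hinj : Function.Injective enc) (N : ℕ)
    (hN : ∀ x, enc x < N) (c d : A) (hcd : c ≠ d) :
    Function.Injective (mgF2 enc N c d) := by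
  intro x y h
  have hx := hN x; have hy := hN y
  simp only [mgF2] at h
  split_ifs at h <;>
    first | omega | (exact hinj (by omega)) | (exfalso; omega) | simp_all

lemma mgKey (enc : A → ℕ) (hinj : Function.Injective enc) (N : ℕ)
    (hN : ∀ x, enc x < N) (c d a b : A) (hcd : c ≠ d) (hab : a ≠ b) :
    ((if mgF1 enc c d a < mgF1 enc c d b then (1 : ℤ) else 0) +
      (if mgF2 enc N c d a < mgF2 enc N c d b then (1 : ℤ) else 0)) =
      if a = c ∧ b = d then 2 else if a = d ∧ b = c then 0 else 1 := by
  classical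
  have ha := hN a; have hb := hN b
  have hab' : enc a ≠ enc b := fun h => hab (hinj h)
  simp only [mgF1, mgF2]
  split_ifs <;> first | rfl | omega | tauto | simp_all

def mgSigmaEquiv {P : Type*} {F : P → Type*} (Q : ∀ p, F p → Prop) :
    {i : (p : P) × F p // Q i.1 i.2} ≃ (p : P) × {j : F p // Q p j} where
  toFun i := ⟨i.1.1, i.1.2, i.2⟩
  invFun x := ⟨⟨x.1, x.2.1⟩, x.2.2⟩
  left_inv := fun ⟨⟨p, j⟩, h⟩ => rfl
  right_inv := fun ⟨p, j, h⟩ => rfl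

def mgEvenEquiv (k : ℕ) : {j : Fin (k + k) // j.val % 2 = 0} ≃ Fin k where
  toFun j := ⟨j.1.1 / 2, by have h1 := j.1.2; have h2 := j.2; omega⟩
  invFun i := ⟨⟨2 * i.1, by have := i.2; omega⟩, show (2 * i.1) % 2 = 0 by omega⟩
  left_inv j := Subtype.ext (Fin.ext (show 2 * (j.1.1 / 2) = j.1.1 by have := j.2; omega))
  right_inv i := Fin.ext (show 2 * i.1 / 2 = i.1 by omega)

def mgOddEquiv (k : ℕ) : {j : Fin (k + k) // ¬ j.val % 2 = 0} ≃ Fin k where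
  toFun j := ⟨j.1.1 / 2, by have h1 := j.1.2; have h2 := j.2; omega⟩
  invFun i := ⟨⟨2 * i.1 + 1, by have := i.2; omega⟩, show ¬ (2 * i.1 + 1) % 2 = 0 by omega⟩
  left_inv j := Subtype.ext (Fin.ext
    (show 2 * (j.1.1 / 2) + 1 = j.1.1 by have := j.2; omega))
  right_inv i := Fin.ext (show (2 * i.1 + 1) / 2 = i.1 by omega)

lemma mgCount (m : ℕ) (hm : Even m) (P Q : Prop) [Decidable P] [Decidable Q] :
    (Nat.card {j : Fin m // if j.val % 2 = 0 then P else Q} : ℤ) =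
      (if P then ((m / 2 : ℕ) : ℤ) else 0) + (if Q then ((m / 2 : ℕ) : ℤ) else 0) := by
  obtain ⟨k, rfl⟩ := hm
  have h2 : (k + k) / 2 = k := by omega
  rw [h2]
  by_cases hP : P <;> by_cases hQ : Q
  · have hall : ∀ j : Fin (k + k), (if j.val % 2 = 0 then P else Q) := by
      intro j; split <;> assumption
    rw [Nat.card_congr (Equiv.subtypeUnivEquiv hall)]
    simp only [Nat.card_eq_fintype_card, Fintype.card_fin, if_pos hP, if_pos hQ]
    push_cast; ring
  · have he : {j : Fin (k + k) // if j.val % 2 = 0 then P else Q} ≃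
        {j : Fin (k + k) // j.val % 2 = 0} :=
      Equiv.subtypeEquivRight (fun j => by by_cases hc : j.val % 2 = 0 <;> simp [hc, hP, hQ])
    rw [Nat.card_congr (he.trans (mgEvenEquiv k))]
    simp [hP, hQ, Nat.card_eq_fintype_card]
  · have he : {j : Fin (k + k) // if j.val % 2 = 0 then P else Q} ≃
        {j : Fin (k + k) // ¬ j.val % 2 = 0} :=
      Equiv.subtypeEquivRight (fun j => by by_cases hc : j.val % 2 = 0 <;> simp [hc, hP, hQ])
    rw [Nat.card_congr (he.trans (mgOddEquiv k))]
    simp [hP, hQ, Nat.card_eq_fintype_card]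
  · have : IsEmpty {j : Fin (k + k) // if j.val % 2 = 0 then P else Q} := by
      refine ⟨fun j => ?_⟩
      have h := j.2
      by_cases hc : j.1.val % 2 = 0
      · rw [if_pos hc] at h; exact hP h
      · rw [if_neg hc] at h; exact hQ h
    simp [hP, hQ]

lemma mgMul (k : ℤ) (P Q P' Q' : Prop) [Decidable P] [Decidable Q]
    [Decidable P'] [Decidable Q'] :
    ((if P then k else 0) + (if Q then k else 0)) -
      ((if P' then k else 0) + (if Q' then k else 0)) =
    k * (((if P then (1 : ℤ) else 0) + (if Q then (1 : ℤ) else 0)) -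
      ((if P' then (1 : ℤ) else 0) + (if Q' then (1 : ℤ) else 0))) := by
  split_ifs <;> ring

end McGarveyAux

theorem stmt_14 {A : Type*} [Fintype A] [DecidableEq A] [Nontrivial A]
    (E : A → A → Prop) [DecidableRel E] (μ : A → A → ℕ)
    (hirr : ∀ a, ¬ E a a)
    (hasym : ∀ a b, E a b → ¬ E b a)
    (hpos : ∀ a b, E a b → 0 < μ a b)
    (heven : ∀ a b, E a b → Even (μ a b)) :
    ∃ orders : Fin (∑ p ∈ Finset.univ.filter (fun p : A × A => E p.1 p.2), μ p.1 p.2)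
        → A → A → Prop,
      (∀ i, IsStrictTotalOrder A (orders i)) ∧
      ∀ a b : A, a ≠ b →
        (Nat.card {i // orders i a b} : ℤ) - (Nat.card {i // orders i b a} : ℤ) =
          (if E a b then (μ a b : ℤ) else if E b a then -(μ b a : ℤ) else 0) := by
  classical
  set S := Finset.univ.filter (fun p : A × A => E p.1 p.2) with hSdef
  have hmemS : ∀ p : A × A, p ∈ S ↔ E p.1 p.2 := by
    intro p; simp [hSdef]
  set N := Fintype.card A with hNdef
  set enc : A → ℕ := fun x => ((Fintype.equivFin A) x : ℕ) with hencdef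
  have hinj : Function.Injective enc := by
    intro x y h
    exact (Fintype.equivFin A).injective (Fin.ext h)
  have hN : ∀ x, enc x < N := fun x => ((Fintype.equivFin A) x).isLt
  have hcard : Fintype.card ((p : {q : A × A // q ∈ S}) × Fin (μ p.1.1 p.1.2)) =
      ∑ p ∈ S, μ p.1 p.2 := by
    rw [Fintype.card_sigma]
    simp only [Fintype.card_fin]
    exact Finset.sum_coe_sort S (fun p => μ p.1 p.2)
  set e : Fin (∑ p ∈ S, μ p.1 p.2) ≃ (p : {q : A × A // q ∈ S}) × Fin (μ p.1.1 p.1.2) :=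
    (Fintype.equivFinOfCardEq hcard).symm with hedef
  refine ⟨fun i x y =>
      if (e i).2.val % 2 = 0 then
        mgF1 enc (e i).1.1.1 (e i).1.1.2 x < mgF1 enc (e i).1.1.1 (e i).1.1.2 y
      else
        mgF2 enc N (e i).1.1.1 (e i).1.1.2 x < mgF2 enc N (e i).1.1.1 (e i).1.1.2 y,
    ?_, ?_⟩
  · intro i
    have hE : E (e i).1.1.1 (e i).1.1.2 := (hmemS _).1 (e i).1.2
    have hne : (e i).1.1.1 ≠ (e i).1.1.2 := fun h => hirr _ (h ▸ hE)
    by_cases h : (e i).2.val % 2 = 0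
    · simp only [if_pos h]
      exact mgSTO _ (mgF1_inj enc hinj _ _ hne)
    · simp only [if_neg h]
      exact mgSTO _ (mgF2_inj enc hinj N hN _ _ hne)
  · intro a b hab
    have hmain : ∀ x y : A,
        (Nat.card {i : Fin (∑ p ∈ S, μ p.1 p.2) //
          if (e i).2.val % 2 = 0 then
            mgF1 enc (e i).1.1.1 (e i).1.1.2 x < mgF1 enc (e i).1.1.1 (e i).1.1.2 y
          else
            mgF2 enc N (e i).1.1.1 (e i).1.1.2 x <
              mgF2 enc N (e i).1.1.1 (e i).1.1.2 y} : ℤ) =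
        ∑ p ∈ S, ((if mgF1 enc p.1 p.2 x < mgF1 enc p.1 p.2 y
              then ((μ p.1 p.2 / 2 : ℕ) : ℤ) else 0) +
            (if mgF2 enc N p.1 p.2 x < mgF2 enc N p.1 p.2 y
              then ((μ p.1 p.2 / 2 : ℕ) : ℤ) else 0)) := by
      intro x y
      rw [show Nat.card {i : Fin (∑ p ∈ S, μ p.1 p.2) //
            if (e i).2.val % 2 = 0 then
              mgF1 enc (e i).1.1.1 (e i).1.1.2 x < mgF1 enc (e i).1.1.1 (e i).1.1.2 y
            else
              mgF2 enc N (e i).1.1.1 (e i).1.1.2 x <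
                mgF2 enc N (e i).1.1.1 (e i).1.1.2 y} =
          Nat.card {i : (p : {q : A × A // q ∈ S}) × Fin (μ p.1.1 p.1.2) //
            if i.2.val % 2 = 0 then
              mgF1 enc i.1.1.1 i.1.1.2 x < mgF1 enc i.1.1.1 i.1.1.2 y
            else
              mgF2 enc N i.1.1.1 i.1.1.2 x < mgF2 enc N i.1.1.1 i.1.1.2 y}
        from Nat.card_congr (Equiv.subtypeEquiv e (fun i => Iff.rfl))]
      rw [Nat.card_congr (mgSigmaEquiv
        (fun (p : {q : A × A // q ∈ S}) (j : Fin (μ p.1.1 p.1.2)) =>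
          if j.val % 2 = 0 then
            mgF1 enc p.1.1 p.1.2 x < mgF1 enc p.1.1 p.1.2 y
          else
            mgF2 enc N p.1.1 p.1.2 x < mgF2 enc N p.1.1 p.1.2 y))]
      rw [Nat.card_eq_fintype_card, Fintype.card_sigma]
      rw [show (∑ p ∈ S, ((if mgF1 enc p.1 p.2 x < mgF1 enc p.1 p.2 y
              then ((μ p.1 p.2 / 2 : ℕ) : ℤ) else 0) +
            (if mgF2 enc N p.1 p.2 x < mgF2 enc N p.1 p.2 y
              then ((μ p.1 p.2 / 2 : ℕ) : ℤ) else 0))) =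
          ∑ p : {q : A × A // q ∈ S},
            ((if mgF1 enc p.1.1 p.1.2 x < mgF1 enc p.1.1 p.1.2 y
              then ((μ p.1.1 p.1.2 / 2 : ℕ) : ℤ) else 0) +
            (if mgF2 enc N p.1.1 p.1.2 x < mgF2 enc N p.1.1 p.1.2 y
              then ((μ p.1.1 p.1.2 / 2 : ℕ) : ℤ) else 0))
        from (Finset.sum_coe_sort S _).symm]
      push_cast
      refine Finset.sum_congr rfl ?_
      intro p _
      rw [← Nat.card_eq_fintype_card]
      exact mgCount (μ p.1.1 p.1.2) (heven _ _ ((hmemS _).1 p.2)) _ _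
    show (Nat.card {i : Fin (∑ p ∈ S, μ p.1 p.2) //
          if (e i).2.val % 2 = 0 then
            mgF1 enc (e i).1.1.1 (e i).1.1.2 a < mgF1 enc (e i).1.1.1 (e i).1.1.2 b
          else
            mgF2 enc N (e i).1.1.1 (e i).1.1.2 a <
              mgF2 enc N (e i).1.1.1 (e i).1.1.2 b} : ℤ) -
        (Nat.card {i : Fin (∑ p ∈ S, μ p.1 p.2) //
          if (e i).2.val % 2 = 0 then
            mgF1 enc (e i).1.1.1 (e i).1.1.2 b < mgF1 enc (e i).1.1.1 (e i).1.1.2 a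
          else
            mgF2 enc N (e i).1.1.1 (e i).1.1.2 b <
              mgF2 enc N (e i).1.1.1 (e i).1.1.2 a} : ℤ) = _
    rw [hmain a b, hmain b a, ← Finset.sum_sub_distrib]
    have hterm : ∀ p ∈ S,
        ((if mgF1 enc p.1 p.2 a < mgF1 enc p.1 p.2 b
            then ((μ p.1 p.2 / 2 : ℕ) : ℤ) else 0) +
          (if mgF2 enc N p.1 p.2 a < mgF2 enc N p.1 p.2 b
            then ((μ p.1 p.2 / 2 : ℕ) : ℤ) else 0)) -
        ((if mgF1 enc p.1 p.2 b < mgF1 enc p.1 p.2 a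
            then ((μ p.1 p.2 / 2 : ℕ) : ℤ) else 0) +
          (if mgF2 enc N p.1 p.2 b < mgF2 enc N p.1 p.2 a
            then ((μ p.1 p.2 / 2 : ℕ) : ℤ) else 0)) =
        (if p = (a, b) then (μ a b : ℤ) else 0) +
          (if p = (b, a) then -(μ b a : ℤ) else 0) := by
      intro p hp
      have hE : E p.1 p.2 := (hmemS p).1 hp
      have hne : p.1 ≠ p.2 := fun h => hirr _ (h ▸ hE)
      obtain ⟨k, hk⟩ := heven _ _ hE
      have hk2 : (μ p.1 p.2 / 2 : ℕ) = k := by omega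
      have h1 := mgKey enc hinj N hN p.1 p.2 a b hne hab
      have h2 := mgKey enc hinj N hN p.1 p.2 b a hne hab.symm
      rw [hk2, mgMul, h1, h2]
      by_cases hca : p.1 = a ∧ p.2 = b
      · simp only [Prod.ext_iff, hca.1, hca.2]
        simp only [and_self, if_true, hab, Ne.symm hab, and_false, false_and,
          if_false, eq_self_iff_true, true_and, and_true]
        have hk' : μ a b = k + k := by rw [← hca.1, ← hca.2]; exact hk
        rw [hk']
        push_cast; ring
      · by_cases hcb : p.1 = b ∧ p.2 = a
        · simp only [Prod.ext_iff, hcb.1, hcb.2]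
          simp only [and_self, if_true, hab, Ne.symm hab, and_false, false_and,
            if_false, eq_self_iff_true, true_and, and_true]
          have hk' : μ b a = k + k := by rw [← hcb.1, ← hcb.2]; exact hk
          rw [hk']
          push_cast; ring
        · have n1 : ¬(a = p.1 ∧ b = p.2) := fun h => hca ⟨h.1.symm, h.2.symm⟩
          have n2 : ¬(a = p.2 ∧ b = p.1) := fun h => hcb ⟨h.2.symm, h.1.symm⟩
          have n3 : ¬(b = p.1 ∧ a = p.2) := fun h => hcb ⟨h.1.symm, h.2.symm⟩
          have n4 : ¬(b = p.2 ∧ a = p.1) := fun h => hca ⟨h.2.symm, h.1.symm⟩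
          have n5 : p ≠ (a, b) := fun h => hca (by rw [h]; exact ⟨rfl, rfl⟩)
          have n6 : p ≠ (b, a) := fun h => hcb (by rw [h]; exact ⟨rfl, rfl⟩)
          rw [if_neg n1, if_neg n2, if_neg n3, if_neg n4, if_neg n5, if_neg n6]
          ring
    rw [Finset.sum_congr rfl hterm, Finset.sum_add_distrib,
      Finset.sum_ite_eq' S (a, b), Finset.sum_ite_eq' S (b, a)]
    simp only [hmemS]
    by_cases hEab : E a b
    · rw [if_pos hEab, if_pos hEab, if_neg (hasym _ _ hEab)]
      ring
    · rw [if_neg hEab, if_neg hEab]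
      by_cases hEba : E b a
      · rw [if_pos hEba]; ring
      · rw [if_neg hEba]; ring
end

section
/- Let G = (V, E) be a finite directed graph with no self-loops and no antiparallel edges, with edge set enumerated as distinct edges e_1, …, e_m, and let f = e_j = (u, v) be a distinguished edge. Let W be the weighted tournament on A = V ∪ {0} constructed from (G, f) as described, and run ranked pairs on W with lexicographic tie-breaking with respect to a linear order on A in which 0 is the minimum. Then 0 is the ranked pairs winner of W if and only if f is not contained in EMAS(G). -/
/-- A directed graph (edge relation) has a directed cycle. -/
def HasCycle {α : Type*} (r : α → α → Prop) : Prop :=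
  ∃ x, Relation.TransGen r x x

/-- The edge relation induced by a set of ordered pairs. -/
def relOf {α : Type*} (S : Set (α × α)) : α → α → Prop :=
  fun x y => (x, y) ∈ S

open Classical in
/-- Greedy procedure: process the pairs in the list in order, adding each pair
unless it would create a directed cycle.  Applied to the edge list of a digraph it
yields the edge maximal acyclic subgraph EMAS; applied to the list of all ordered
pairs of distinct candidates sorted by decreasing weight (ties broken
lexicographically) it yields the final ranked pairs relation. -/
noncomputable def greedy {α : Type*} (l : List (α × α)) : Set (α × α) :=
  l.foldl (fun S e => if HasCycle (relOf (insert e S)) then S else insert e S) ∅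

/-- The weight function of the tournament `W` on `A = V ∪ {0}` (encoded as `WithBot V`,
with `0 = ⊥`) built from the edge list `es` (0-indexed; edge `es[i]` corresponds to
`e_{i+1}`) and the distinguished edge `f = es[j] = (u, v)`:
`μ(0, v) = m + 1`, `μ(u, 0) = m - j` (0-indexed `j`), `μ(es[i]) = m - i` for `i ≠ j`,
and every other ordered pair has weight `0`. -/
def wt {V : Type*} [DecidableEq V] (es : List (V × V)) (j : ℕ) (u v : V)
    (p : WithBot V × WithBot V) : ℕ :=
  if p.1 = ⊥ then (if p.2 = (v : WithBot V) then es.length + 1 else 0)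
  else if p.2 = ⊥ then (if p.1 = (u : WithBot V) then es.length - j else 0)
  else
    let x := WithBot.unbotD u p.1
    let y := WithBot.unbotD u p.2
    if (x, y) ∈ es ∧ (x, y) ≠ (u, v) then es.length - es.idxOf (x, y) else 0

/-- Processing priority for ranked pairs: larger weight first,
ties broken lexicographically with respect to the linear order on candidates. -/
def prio {A : Type*} [LinearOrder A] (w : A × A → ℕ) (p q : A × A) : Prop :=
  w q < w p ∨ (w p = w q ∧ (p.1 < q.1 ∨ (p.1 = q.1 ∧ p.2 < q.2)))

open Relation List

section Aux

variable {α : Type*}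

open Classical in
/-- One step of the greedy procedure. -/
noncomputable def gstep (S : Set (α × α)) (e : α × α) : Set (α × α) :=
  if HasCycle (relOf (insert e S)) then S else insert e S

lemma greedy_eq (l : List (α × α)) : greedy l = l.foldl gstep ∅ := rfl

lemma gstep_of_not {S : Set (α × α)} {e : α × α} (h : ¬ HasCycle (relOf (insert e S))) :
    gstep S e = insert e S := by
  unfold gstep; exact if_neg h

lemma gstep_subset_insert (S : Set (α × α)) (e : α × α) : gstep S e ⊆ insert e S := by
  unfold gstep; split
  · exact Set.subset_insert _ _
  · exact subset_rfl

lemma subset_gstep (S : Set (α × α)) (e : α × α) : S ⊆ gstep S e := by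
  unfold gstep; split
  · exact subset_rfl
  · exact Set.subset_insert _ _

lemma subset_foldl (S : Set (α × α)) (l : List (α × α)) : S ⊆ l.foldl gstep S := by
  induction l generalizing S with
  | nil => exact subset_rfl
  | cons e l ih => exact (subset_gstep S e).trans (ih _)

lemma foldl_subset (S : Set (α × α)) (l : List (α × α)) :
    l.foldl gstep S ⊆ S ∪ {p | p ∈ l} := by
  induction l generalizing S with
  | nil => simp
  | cons e l ih =>
    intro p hp
    rcases ih (gstep S e) hp with h | h
    · rcases gstep_subset_insert S e h with h | h
      · exact Or.inr (by simp [h])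
      · exact Or.inl h
    · exact Or.inr (by simp [Set.mem_setOf_eq] at h ⊢; exact Or.inr h)

lemma not_hasCycle_empty : ¬ HasCycle (relOf (∅ : Set (α × α))) := by
  rintro ⟨x, hx⟩
  cases hx with
  | single h => exact h
  | tail _ h => exact h

lemma gstep_not_hasCycle {S : Set (α × α)} (h : ¬ HasCycle (relOf S)) (e : α × α) :
    ¬ HasCycle (relOf (gstep S e)) := by
  unfold gstep; split
  · exact h
  · next hc => exact hc

lemma foldl_not_hasCycle {S : Set (α × α)} (h : ¬ HasCycle (relOf S)) (l : List (α × α)) :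
    ¬ HasCycle (relOf (l.foldl gstep S)) := by
  induction l generalizing S with
  | nil => exact h
  | cons e l ih => exact ih (gstep_not_hasCycle h e)

lemma transGen_insert {S : Set (α × α)} {p : α × α} {x y : α}
    (h : TransGen (relOf (insert p S)) x y) :
    TransGen (relOf S) x y ∨
      (ReflTransGen (relOf S) x p.1 ∧ ReflTransGen (relOf S) p.2 y) := by
  induction h with
  | single hxy =>
    rcases Set.mem_insert_iff.mp hxy with h | h
    · rw [Prod.ext_iff] at h
      exact Or.inr ⟨by rw [← h.1], by rw [← h.2]⟩
    · exact Or.inl (TransGen.single h)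
  | tail hb hbc ih =>
    rcases Set.mem_insert_iff.mp hbc with h | h
    · rw [Prod.ext_iff] at h
      rcases ih with h1 | ⟨h1, h2⟩
      · exact Or.inr ⟨h.1 ▸ h1.to_reflTransGen, h.2 ▸ ReflTransGen.refl⟩
      · exact Or.inr ⟨h1, h.2 ▸ ReflTransGen.refl⟩
    · rcases ih with h1 | ⟨h1, h2⟩
      · exact Or.inl (h1.tail h)
      · exact Or.inr ⟨h1, h2.tail h⟩

lemma hasCycle_insert_iff {S : Set (α × α)} (hS : ¬ HasCycle (relOf S)) (p : α × α) :
    HasCycle (relOf (insert p S)) ↔ ReflTransGen (relOf S) p.2 p.1 := by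
  constructor
  · rintro ⟨x, hx⟩
    rcases transGen_insert hx with h | ⟨h1, h2⟩
    · exact absurd ⟨x, h⟩ hS
    · exact h2.trans h1
  · intro h
    refine ⟨p.1, TransGen.head' ?_ (ReflTransGen.mono (fun a b hab => Set.mem_insert_iff.mpr (Or.inr hab)) _ _ h)⟩
    exact Set.mem_insert_iff.mpr (Or.inl (Prod.ext rfl rfl))

end Aux

section Main

variable {V : Type*} [LinearOrder V]

/-- The embedding of `V`-edges into pairs over `WithBot V`, replacing the distinguished
edge `(u, v)` by `(u, ⊥)`. -/
def emb (u v : V) (e : V × V) : WithBot V × WithBot V :=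
  if e = (u, v) then ((u : WithBot V), ⊥) else ((e.1 : WithBot V), (e.2 : WithBot V))

lemma cyc_iff (u v : V) (S : Set (V × V)) :
    HasCycle (relOf (insert (⊥, (v : WithBot V)) (emb u v '' S))) ↔
      HasCycle (relOf S) := by
  set R : Set (WithBot V × WithBot V) := insert (⊥, (v : WithBot V)) (emb u v '' S) with hR
  have hedge : ∀ a b : WithBot V, relOf R a b →
      (a = ⊥ ∧ b = (v : WithBot V)) ∨
      (a = (u : WithBot V) ∧ b = ⊥ ∧ (u, v) ∈ S) ∨
      (∃ x y : V, a = (x : WithBot V) ∧ b = (y : WithBot V) ∧ (x, y) ∈ S) := by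
    intro a b hab
    rcases Set.mem_insert_iff.mp hab with h | ⟨e, heS, he⟩
    · rw [Prod.ext_iff] at h
      exact Or.inl ⟨h.1, h.2⟩
    · unfold emb at he
      split at he
      · next heq =>
        rw [Prod.ext_iff] at he
        refine Or.inr (Or.inl ⟨he.1.symm, he.2.symm, ?_⟩)
        rwa [heq] at heS
      · rw [Prod.ext_iff] at he
        exact Or.inr (Or.inr ⟨e.1, e.2, he.1.symm, he.2.symm, by simpa using heS⟩)
  have hlift : ∀ x y : WithBot V, ReflTransGen (relOf R) x y →
      ReflTransGen (relOf S) (WithBot.unbotD v x) (WithBot.unbotD v y) := by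
    intro x y h
    refine ReflTransGen.lift' (fun z => WithBot.unbotD v z) ?_ x y h
    intro a b hab
    show ReflTransGen (relOf S) (WithBot.unbotD v a) (WithBot.unbotD v b)
    rcases hedge a b hab with ⟨rfl, rfl⟩ | ⟨rfl, rfl, hS⟩ | ⟨x', y', rfl, rfl, hS⟩
    · simp only [WithBot.unbotD_bot, WithBot.unbotD_coe]
      exact ReflTransGen.refl
    · simp only [WithBot.unbotD_bot, WithBot.unbotD_coe]
      exact ReflTransGen.single hS
    · simp only [WithBot.unbotD_coe]
      exact ReflTransGen.single hS
  constructor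
  · rintro ⟨z, hz⟩
    obtain ⟨w, hzw, hwz⟩ := TransGen.head'_iff.mp hz
    rcases hedge z w hzw with ⟨rfl, rfl⟩ | ⟨rfl, rfl, hS⟩ | ⟨x, y, rfl, rfl, hS⟩
    · rcases hwz.cases_tail with h0 | ⟨c, hvc, hcb⟩
      · exact absurd h0 (by simp)
      · rcases hedge c ⊥ hcb with ⟨_, hb⟩ | ⟨rfl, _, hS⟩ | ⟨x, y, _, hy, _⟩
        · exact absurd hb (by simp)
        · have h1 : ReflTransGen (relOf S) v u := by
            simpa using hlift _ _ hvc
          exact ⟨u, TransGen.head' hS h1⟩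
        · exact absurd hy (by simp)
    · rcases hwz.cases_head with h0 | ⟨c, hbc, hcu⟩
      · exact absurd h0 (by simp)
      · rcases hedge ⊥ c hbc with ⟨_, rfl⟩ | ⟨ha, _⟩ | ⟨x, y, hx, _, _⟩
        · have h1 : ReflTransGen (relOf S) v u := by
            simpa using hlift _ _ hcu
          exact ⟨u, TransGen.head' hS h1⟩
        · exact absurd ha.symm (by simp)
        · exact absurd hx.symm (by simp)
    · have h1 : ReflTransGen (relOf S) y x := by
        simpa using hlift _ _ hwz
      exact ⟨x, TransGen.head' hS h1⟩
  · rintro ⟨x, hx⟩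
    refine ⟨(x : WithBot V), TransGen.lift' (fun a : V => (a : WithBot V)) ?_ x x hx⟩
    intro a b hab
    show TransGen (relOf R) (a : WithBot V) (b : WithBot V)
    by_cases h : (a, b) = (u, v)
    · rw [Prod.ext_iff] at h
      simp only [] at h
      rw [h.1, h.2] at hab ⊢
      have e1 : relOf R (u : WithBot V) ⊥ := by
        refine Set.mem_insert_of_mem _ ?_
        have := Set.mem_image_of_mem (emb u v) hab
        simpa [emb] using this
      have e2 : relOf R ⊥ (v : WithBot V) := Set.mem_insert _ _
      exact TransGen.head e1 (TransGen.single e2)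
    · refine TransGen.single (Set.mem_insert_of_mem _ ?_)
      have := Set.mem_image_of_mem (emb u v) hab
      simpa [emb, h] using this

lemma corr (es : List (V × V)) (u v : V) :
    ∀ k ≤ es.length,
    List.foldl gstep ∅ ((⊥, (v : WithBot V)) ::
        (((List.finRange es.length).take k).map (fun i => emb u v (es.get i))))
      = insert (⊥, (v : WithBot V)) (emb u v '' (List.foldl gstep ∅ (es.take k))) := by
  intro k hk
  induction k with
  | zero =>
    simp only [List.take_zero, List.map_nil, List.foldl_cons, List.foldl_nil]
    have hnc : ¬ HasCycle (relOf (insert (⊥, (v : WithBot V))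
        (∅ : Set (WithBot V × WithBot V)))) := by
      rw [show (∅ : Set (WithBot V × WithBot V)) = emb u v '' ∅ by simp, cyc_iff]
      exact not_hasCycle_empty
    unfold gstep
    rw [if_neg hnc]
    simp
  | succ k ih =>
    have hk' : k < es.length := hk
    have hkf : k < (List.finRange es.length).length := by
      simpa using hk'
    have ihe := ih (le_of_lt hk')
    rw [List.foldl_cons] at ihe
    rw [← List.take_concat_get' _ k hkf, ← List.take_concat_get' _ k hk',
      List.map_append, List.foldl_cons, List.foldl_append, List.foldl_append, ihe]
    have hgE : (List.finRange es.length)[k] = (⟨k, hk'⟩ : Fin es.length) := by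
      simp [List.getElem_finRange]
    simp only [List.map_cons, List.map_nil, List.foldl_cons, List.foldl_nil, hgE]
    set e : V × V := es.get ⟨k, hk'⟩ with he
    set Sk : Set (V × V) := List.foldl gstep ∅ (es.take k) with hSk
    have hgetE : es[k] = e := rfl
    rw [hgetE]
    have hins : insert (emb u v e) (insert (⊥, (v : WithBot V)) (emb u v '' Sk))
        = insert (⊥, (v : WithBot V)) (emb u v '' insert e Sk) := by
      rw [Set.image_insert_eq, Set.insert_comm]
    unfold gstep
    rw [hins]
    by_cases hcyc : HasCycle (relOf (insert e Sk))
    · rw [if_pos ((cyc_iff u v _).mpr hcyc), if_pos hcyc]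
    · rw [if_neg (fun h => hcyc ((cyc_iff u v _).mp h)), if_neg hcyc]

end Main


section Weights

variable {V : Type*} [LinearOrder V]

lemma my_indexOf_cons {α : Type*} [BEq α] (a b : α) (l : List α) :
    (b :: l).idxOf a = if b == a then 0 else (l.idxOf a) + 1 := by
  simp [List.idxOf, List.findIdx_cons, Bool.cond_eq_ite]

lemma my_indexOf_lt {α : Type*} [BEq α] [LawfulBEq α] {a : α} {l : List α} (h : a ∈ l) :
    l.idxOf a < l.length := by
  induction l with
  | nil => simp at h
  | cons b t ih =>
    rw [my_indexOf_cons]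
    split
    · simp
    · next hba =>
      have hat : a ∈ t := by
        rcases List.mem_cons.mp h with h' | h'
        · exact absurd (beq_iff_eq.mpr h'.symm) (by simpa using hba)
        · exact h'
      simpa [Nat.succ_lt_succ_iff] using ih hat

lemma my_getElem_indexOf {α : Type*} [BEq α] [LawfulBEq α] {a : α} {l : List α} (h : a ∈ l)
    (hlt : l.idxOf a < l.length) : l[l.idxOf a] = a := by
  induction l with
  | nil => simp at h
  | cons b t ih =>
    by_cases hba : b = a
    · have h0 : (b :: t).idxOf a = 0 := by
        rw [my_indexOf_cons, if_pos (beq_iff_eq.mpr hba)]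
      simp only [h0] at hlt ⊢
      simpa using hba
    · have h1 : (b :: t).idxOf a = t.idxOf a + 1 := by
        rw [my_indexOf_cons, if_neg (by simpa using hba)]
      have hat : a ∈ t := by
        rcases List.mem_cons.mp h with h' | h'
        · exact absurd h'.symm hba
        · exact h'
      have hlt' : t.idxOf a < t.length := my_indexOf_lt hat
      simp only [h1] at hlt ⊢
      simpa using ih hat hlt'

lemma my_indexOf_get {α : Type*} [BEq α] [LawfulBEq α] {l : List α} (hnd : l.Nodup)
    (i : Fin l.length) : l.idxOf (l.get i) = i.1 := by
  have hm : l.get i ∈ l := by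
    have := List.get_mem l i
    simpa using this
  have hlt : l.idxOf (l.get i) < l.length := my_indexOf_lt hm
  have h1 : l.get ⟨l.idxOf (l.get i), hlt⟩ = l.get i := by
    have := my_getElem_indexOf hm hlt
    simpa [List.get_eq_getElem] using this
  exact congrArg Fin.val (hnd.get_inj_iff.mp h1)

lemma wt_bv (es : List (V × V)) (u v : V) (j : ℕ) :
    wt es j u v (⊥, (v : WithBot V)) = es.length + 1 := by
  simp [wt]

lemma wt_emb (es : List (V × V)) (u v : V) (hnd : es.Nodup) (j : Fin es.length)
    (hf : es.get j = (u, v)) (i : Fin es.length) :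
    wt es j.1 u v (emb u v (es.get i)) = es.length - i.1 := by
  by_cases hij : es.get i = (u, v)
  · have hij' : i = j := hnd.get_inj_iff.mp (hij.trans hf.symm)
    rw [hij, hij']
    simp [emb, wt]
  · have hmem : es.get i ∈ es := by
      have := List.get_mem es i
      simpa using this
    have hidx : es.idxOf (es.get i) = i.1 := my_indexOf_get hnd i
    have hembeq : emb u v (es.get i)
        = ((((es.get i).1 : V) : WithBot V), (((es.get i).2 : V) : WithBot V)) := by
      have hij2 : es[i.1]'i.2 ≠ (u, v) := hij
      simp [emb, hij2]
    rw [hembeq]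
    simp only [wt, WithBot.unbotD_coe]
    split
    · next h => simp at h
    · split
      · next h => simp at h
      · by_cases h : ((es.get i).1, (es.get i).2) ∈ es ∧ ((es.get i).1, (es.get i).2) ≠ (u, v)
        · refine (if_pos h).trans ?_
          rw [show ((es.get i).1, (es.get i).2) = es.get i from rfl, hidx]
        · exact absurd ⟨hmem, hij⟩ h

lemma wt_pos_char (es : List (V × V)) (u v : V) (hnd : es.Nodup) (j : Fin es.length)
    (hf : es.get j = (u, v)) (p : WithBot V × WithBot V)
    (hp : wt es j.1 u v p ≠ 0) :
    p = (⊥, (v : WithBot V)) ∨ ∃ i : Fin es.length, p = emb u v (es.get i) := by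
  obtain ⟨a, b⟩ := p
  induction a using WithBot.recBotCoe with
  | bot =>
    left
    simp only [wt] at hp
    split at hp
    · split at hp
      · next h2 => rw [h2]
      · exact absurd rfl hp
    · next h => simp at h
  | coe x =>
    right
    induction b using WithBot.recBotCoe with
    | bot =>
      simp only [wt] at hp
      split at hp
      · next h => simp at h
      · split at hp
        · split at hp
          · next h =>
            refine ⟨j, ?_⟩
            rw [hf]
            simpa [emb, Prod.ext_iff] using h
          · exact absurd rfl hp
        · next h => simp at h
    | coe y =>
      simp only [wt, WithBot.unbotD_coe] at hp
      split at hp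
      · next h => simp at h
      · split at hp
        · next h => simp at h
        · by_cases h : (x, y) ∈ es ∧ (x, y) ≠ (u, v)
          · obtain ⟨hmem, hne⟩ := h
            have hlt : es.idxOf (x, y) < es.length := my_indexOf_lt hmem
            refine ⟨⟨es.idxOf (x, y), hlt⟩, ?_⟩
            have hget : es.get ⟨es.idxOf (x, y), hlt⟩ = (x, y) := by
              have := my_getElem_indexOf hmem hlt
              simpa [List.get_eq_getElem] using this
            rw [hget]
            simp [emb, hne]
          · exact absurd (if_neg h) hp

lemma prio_irrefl {A : Type*} [LinearOrder A] (w : A × A → ℕ) (p : A × A) :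
    ¬ prio w p p := by
  simp [prio]

lemma prio_asymm {A : Type*} [LinearOrder A] (w : A × A → ℕ) (p q : A × A) :
    prio w p q → prio w q p → False := by
  rintro (h | ⟨h1, h2⟩) (g | ⟨g1, g2⟩)
  · exact absurd (h.trans g) (lt_irrefl _)
  · exact absurd h (g1 ▸ lt_irrefl _)
  · exact absurd g (h1 ▸ lt_irrefl _)
  · rcases h2 with h2 | ⟨h2, h2'⟩ <;> rcases g2 with g2 | ⟨g2, g2'⟩
    · exact lt_asymm h2 g2
    · exact absurd h2 (g2 ▸ lt_irrefl _)
    · exact absurd g2 (h2 ▸ lt_irrefl _)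
    · exact lt_asymm h2' g2'

lemma prefix_of_sorted {β : Type*} {r : β → β → Prop}
    (hr : ∀ a b, r a b → r b a → False) :
    ∀ (M l : List β), M.Pairwise r → l.Pairwise r → l.Nodup →
      (∀ x ∈ M, x ∈ l) → (∀ x ∈ l, x ∉ M → ∀ y ∈ M, r y x) → M <+: l := by
  intro M
  induction M with
  | nil => exact fun l _ _ _ _ _ => List.nil_prefix
  | cons a M ih =>
    intro l hM hl hnd hsub hcl
    obtain ⟨b, l', rfl⟩ : ∃ b l', l = b :: l' := by
      cases l with
      | nil => exact absurd (hsub a (List.mem_cons_self)) (List.not_mem_nil)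
      | cons b l' => exact ⟨b, l', rfl⟩
    have hba : b = a := by
      by_contra hne
      have hal' : a ∈ l' :=
        (List.mem_cons.mp (hsub a (List.mem_cons_self))).resolve_left
          fun h => hne (h.symm)
      have hrba : r b a := (List.pairwise_cons.mp hl).1 a hal'
      have hrab : r a b := by
        by_cases hbM : b ∈ a :: M
        · rcases List.mem_cons.mp hbM with h | h
          · exact absurd h hne
          · exact (List.pairwise_cons.mp hM).1 b h
        · exact hcl b (List.mem_cons_self) hbM a (List.mem_cons_self)
      exact hr a b hrab hrba
    subst hba
    have hres : M <+: l' := by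
      refine ih l' (List.pairwise_cons.mp hM).2 (List.pairwise_cons.mp hl).2
        (List.nodup_cons.mp hnd).2 ?_ ?_
      · intro x hx
        rcases List.mem_cons.mp (hsub x (List.mem_cons_of_mem b hx)) with h | h
        · exact absurd (h ▸ hx) (fun hxM =>
            hr b b ((List.pairwise_cons.mp hM).1 b hxM) ((List.pairwise_cons.mp hM).1 b hxM))
        · exact h
      · intro x hx hxM
        have hxb : x ≠ b := fun h => (List.nodup_cons.mp hnd).1 (h ▸ hx)
        have hxM' : x ∉ b :: M := fun h =>
          (List.mem_cons.mp h).elim hxb hxM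
        intro y hy
        exact hcl x (List.mem_cons_of_mem b hx) hxM' y (List.mem_cons_of_mem b hy)
    obtain ⟨t, ht⟩ := hres
    exact ⟨t, by rw [List.cons_append, ht]⟩

end Weights

theorem stmt_15 {V : Type*} [Fintype V] [LinearOrder V]
    (es : List (V × V)) (hnd : es.Nodup)
    (hirr : ∀ e ∈ es, e.1 ≠ e.2)
    (hanti : ∀ e ∈ es, (e.2, e.1) ∉ es)
    (j : Fin es.length) (u v : V) (hf : es.get j = (u, v))
    (l : List (WithBot V × WithBot V))
    (hmem : ∀ p : WithBot V × WithBot V, p ∈ l ↔ p.1 ≠ p.2)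
    (hsort : l.Pairwise (prio (wt es j.1 u v))) :
    ((∀ y : WithBot V, y ≠ ⊥ → Relation.TransGen (relOf (greedy l)) ⊥ y) ↔
      (u, v) ∉ greedy es) := by
  classical
  set W := wt es j.1 u v with hW
  set L1 : List (WithBot V × WithBot V) :=
    (⊥, (v : WithBot V)) :: (List.finRange es.length).map (fun i => emb u v (es.get i)) with hL1
  have hwtq : ∀ i : Fin es.length, W (emb u v (es.get i)) = es.length - i.1 :=
    fun i => wt_emb es u v hnd j hf i
  have hwtbv : W (⊥, (v : WithBot V)) = es.length + 1 := wt_bv es u v j.1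
  have hL1sorted : L1.Pairwise (prio W) := by
    rw [hL1, List.pairwise_cons]
    constructor
    · intro p hp
      obtain ⟨i, _, rfl⟩ := List.mem_map.mp hp
      left
      rw [hwtbv, hwtq]
      omega
    · rw [List.pairwise_map]
      refine (List.pairwise_lt_finRange es.length).imp ?_
      intro i i' hii'
      left
      rw [hwtq, hwtq]
      exact Nat.sub_lt_sub_left i.2 hii'
  have hlnd : l.Nodup := by
    refine List.Pairwise.imp ?_ hsort
    intro a b hab he
    subst he
    exact prio_irrefl W a hab
  have hsubL1 : ∀ p ∈ L1, p ∈ l := by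
    intro p hp
    rw [hmem]
    rw [hL1] at hp
    rcases List.mem_cons.mp hp with h | h
    · rw [h]; simp
    · obtain ⟨i, _, rfl⟩ := List.mem_map.mp h
      have hgm : es.get i ∈ es := by have := List.get_mem es i; simpa using this
      by_cases hiuv : es.get i = (u, v)
      · rw [show emb u v (es.get i) = ((u : WithBot V), (⊥ : WithBot V)) from by
          unfold emb; rw [if_pos hiuv]]
        simp
      · rw [show emb u v (es.get i)
            = (((es.get i).1 : WithBot V), ((es.get i).2 : WithBot V)) from by
          unfold emb; rw [if_neg hiuv]]
        have h12 := hirr (es.get i) hgm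
        intro hcontra
        have hcontra' : ((es.get i).1 : WithBot V) = ((es.get i).2 : WithBot V) := hcontra
        exact h12 (by exact_mod_cast hcontra')
  have hchar : ∀ p ∈ l, p ∉ L1 → W p = 0 := by
    intro p _ hpL1
    by_contra h
    rcases wt_pos_char es u v hnd j hf p h with h1 | ⟨i, h1⟩
    · exact hpL1 (h1 ▸ List.mem_cons_self)
    · refine hpL1 ?_
      rw [hL1, h1]
      exact List.mem_cons_of_mem _ (List.mem_map.mpr ⟨i, List.mem_finRange i, rfl⟩)
  have hwtL1pos : ∀ p ∈ L1, 0 < W p := by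
    intro p hp
    rcases List.mem_cons.mp hp with h | h
    · rw [h, hwtbv]; omega
    · obtain ⟨i, _, rfl⟩ := List.mem_map.mp h
      rw [hwtq]
      have := i.2
      omega
  have hcl : ∀ p ∈ l, p ∉ L1 → ∀ y' ∈ L1, prio W y' p := by
    intro p hpl hpL1 y' hy'
    left
    rw [hchar p hpl hpL1]
    exact hwtL1pos y' hy'
  obtain ⟨L2, hsplit⟩ :=
    prefix_of_sorted (prio_asymm W) L1 l hL1sorted hsort hlnd hsubL1 hcl
  have hTm : List.foldl gstep ∅ L1 = insert (⊥, (v : WithBot V)) (emb u v '' greedy es) := by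
    have hcorr := corr es u v es.length (le_refl _)
    have h1 : (List.finRange es.length).take es.length = List.finRange es.length :=
      List.take_of_length_le (by simp)
    rw [h1, List.take_length, ← greedy_eq] at hcorr
    exact hcorr
  have hGL : greedy l = List.foldl gstep (List.foldl gstep ∅ L1) L2 := by
    rw [greedy_eq, ← hsplit, List.foldl_append]
  have hacyc : ¬ HasCycle (relOf (greedy l)) := by
    rw [greedy_eq]
    exact foldl_not_hasCycle not_hasCycle_empty l
  have hTmsub : insert (⊥, (v : WithBot V)) (emb u v '' greedy es) ⊆ greedy l := by
    rw [hGL, ← hTm]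
    exact subset_foldl _ _
  have hdisj : L1.Disjoint L2 :=
    List.disjoint_of_nodup_append (by rw [hsplit]; exact hlnd)
  have hwtL2 : ∀ p ∈ L2, W p = 0 := by
    intro p hp
    refine hchar p ?_ ?_
    · rw [← hsplit]; exact List.mem_append_right _ hp
    · exact fun h => hdisj h hp
  constructor
  · intro hall hin
    have hub : ((u : WithBot V), (⊥ : WithBot V)) ∈ greedy l := by
      refine hTmsub (Set.mem_insert_of_mem _ ?_)
      exact ⟨(u, v), hin, by simp [emb]⟩
    have h1 := hall (u : WithBot V) WithBot.coe_ne_bot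
    exact hacyc ⟨⊥, h1.tail hub⟩
  · intro hnotin y hy
    by_cases hyv : y = (v : WithBot V)
    · subst hyv
      exact Relation.TransGen.single (hTmsub (Set.mem_insert _ _))
    · have hpl : ((⊥ : WithBot V), y) ∈ l := (hmem _).mpr (Ne.symm hy)
      have hpL1 : ((⊥ : WithBot V), y) ∉ L1 := by
        intro hmemL1
        rw [hL1] at hmemL1
        rcases List.mem_cons.mp hmemL1 with h | h
        · rw [Prod.ext_iff] at h
          exact hyv h.2
        · obtain ⟨i, _, hqi⟩ := List.mem_map.mp h
          unfold emb at hqi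
          split at hqi
          · rw [Prod.ext_iff] at hqi
            exact WithBot.coe_ne_bot hqi.1
          · rw [Prod.ext_iff] at hqi
            exact WithBot.coe_ne_bot hqi.1
      have hpL2 : ((⊥ : WithBot V), y) ∈ L2 := by
        have hh := hpl
        rw [← hsplit] at hh
        exact (List.mem_append.mp hh).resolve_left hpL1
      obtain ⟨l2a, l2b, hsplit2⟩ := List.append_of_mem hpL2
      have hl' : l = (L1 ++ l2a) ++ ((⊥ : WithBot V), y) :: l2b := by
        rw [← hsplit, hsplit2, List.append_assoc]
      have hS1acyc : ¬ HasCycle (relOf (List.foldl gstep ∅ (L1 ++ l2a))) :=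
        foldl_not_hasCycle not_hasCycle_empty _
      have hS1eq : List.foldl gstep ∅ (L1 ++ l2a)
          = List.foldl gstep (insert (⊥, (v : WithBot V)) (emb u v '' greedy es)) l2a := by
        rw [List.foldl_append, hTm]
      have hnoin : ∀ c : WithBot V,
          (c, (⊥ : WithBot V)) ∉ List.foldl gstep ∅ (L1 ++ l2a) := by
        intro c hc
        rw [hS1eq] at hc
        rcases foldl_subset _ l2a hc with h | h
        · rcases Set.mem_insert_iff.mp h with h1 | ⟨e, heS, he⟩
          · rw [Prod.ext_iff] at h1
            exact absurd h1.2 (by simp)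
          · unfold emb at he
            split at he
            · next heq => exact hnotin (heq ▸ heS)
            · rw [Prod.ext_iff] at he
              exact WithBot.coe_ne_bot he.2
        · have hcl2a : (c, (⊥ : WithBot V)) ∈ l2a := h
          have hpair := List.pairwise_append.mp (by rw [← hl']; exact hsort)
          have hprio : prio W (c, (⊥ : WithBot V)) ((⊥ : WithBot V), y) :=
            hpair.2.2 _ (List.mem_append_right _ hcl2a) _ (List.mem_cons_self)
          have hw1 : W (c, (⊥ : WithBot V)) = 0 :=
            hwtL2 _ (by rw [hsplit2]; exact List.mem_append_left _ hcl2a)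
          have hw2 : W ((⊥ : WithBot V), y) = 0 := hwtL2 _ hpL2
          rcases hprio with h1 | ⟨_, h2⟩
          · rw [hw1, hw2] at h1
            exact absurd h1 (lt_irrefl 0)
          · rcases h2 with h2 | ⟨h2, _⟩
            · exact absurd h2 (by simp)
            · have hcl_mem : (c, (⊥ : WithBot V)) ∈ l := by
                rw [hl']
                exact List.mem_append_left _ (List.mem_append_right _ hcl2a)
              exact (hmem _).mp hcl_mem h2
      have hrtg : ¬ Relation.ReflTransGen
          (relOf (List.foldl gstep ∅ (L1 ++ l2a))) y ⊥ := by
        intro h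
        rcases h.cases_tail with h0 | ⟨c, _, hc⟩
        · exact hy h0.symm
        · exact hnoin c hc
      have hnc : ¬ HasCycle (relOf (insert ((⊥ : WithBot V), y)
          (List.foldl gstep ∅ (L1 ++ l2a)))) := by
        rw [hasCycle_insert_iff hS1acyc]
        exact hrtg
      have hpGL : ((⊥ : WithBot V), y) ∈ greedy l := by
        rw [greedy_eq, hl', List.foldl_append, List.foldl_cons]
        refine subset_foldl _ _ ?_
        show ((⊥ : WithBot V), y) ∈ gstep (List.foldl gstep ∅ (L1 ++ l2a)) _
        rw [gstep_of_not hnc]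
        exact Set.mem_insert _ _
      exact Relation.TransGen.single hpGL
end
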